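/- arXiv:1201.6122 — 6 statements merged into one kernel-verified Lean document; each statement's English description precedes it below -/
import Mathlib

section
/- Let α be a smooth unit-speed curve in E³ defined on an open interval I with constant curvature κ ≡ 1. Then the tangent indicatrix T = α' of α is a spherical helix (i.e. there exist a unit vector d and a constant c with ⟪α''(s), d⟫ = c for all s ∈ I) if and only if det(α⁽³⁾(s), α⁽⁴⁾(s), α⁽⁵⁾(s)) = 0 for all s ∈ I. -/
open scoped RealInnerProductSpace

/-- Determinant of the 3×3 matrix whose rows are the vectors `u`, `v`, `w` of `E³`. -/
noncomputable def det3 (u v w : EuclideanSpace ℝ (Fin 3)) : ℝ :=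
  Matrix.det !![u 0, u 1, u 2; v 0, v 1, v 2; w 0, w 1, w 2]

namespace SphHelixAux

noncomputable section

variable (α : ℝ → EuclideanSpace ℝ (Fin 3))

def cA (n : ℕ) (i : Fin 3) : ℝ → ℝ := fun x => iteratedDeriv n α x i

def dt (a b : ℕ) : ℝ → ℝ := fun x =>
  cA α a 0 x * cA α b 0 x + cA α a 1 x * cA α b 1 x + cA α a 2 x * cA α b 2 x

/-- det(α'', α''', α'''') -/
def gg : ℝ → ℝ := fun x =>
  cA α 2 0 x * (cA α 3 1 x * cA α 4 2 x - cA α 3 2 x * cA α 4 1 x) -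
  cA α 2 1 x * (cA α 3 0 x * cA α 4 2 x - cA α 3 2 x * cA α 4 0 x) +
  cA α 2 2 x * (cA α 3 0 x * cA α 4 1 x - cA α 3 1 x * cA α 4 0 x)

/-- det(α'', α''', α⁽⁵⁾) -/
def hh : ℝ → ℝ := fun x =>
  cA α 2 0 x * (cA α 3 1 x * cA α 5 2 x - cA α 3 2 x * cA α 5 1 x) -
  cA α 2 1 x * (cA α 3 0 x * cA α 5 2 x - cA α 3 2 x * cA α 5 0 x) +
  cA α 2 2 x * (cA α 3 0 x * cA α 5 1 x - cA α 3 1 x * cA α 5 0 x)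

/-- components of α'' × α''' -/
def X0 : ℝ → ℝ := fun x => cA α 2 1 x * cA α 3 2 x - cA α 2 2 x * cA α 3 1 x
def X1 : ℝ → ℝ := fun x => cA α 2 2 x * cA α 3 0 x - cA α 2 0 x * cA α 3 2 x
def X2 : ℝ → ℝ := fun x => cA α 2 0 x * cA α 3 1 x - cA α 2 1 x * cA α 3 0 x

/-- components of α'' × α'''' -/
def Y0 : ℝ → ℝ := fun x => cA α 2 1 x * cA α 4 2 x - cA α 2 2 x * cA α 4 1 x
def Y1 : ℝ → ℝ := fun x => cA α 2 2 x * cA α 4 0 x - cA α 2 0 x * cA α 4 2 x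
def Y2 : ℝ → ℝ := fun x => cA α 2 0 x * cA α 4 1 x - cA α 2 1 x * cA α 4 0 x

/-- components of N = g·t + e·(t × u) -/
def N0 : ℝ → ℝ := fun x => gg α x * cA α 2 0 x + dt α 3 3 x * X0 α x
def N1 : ℝ → ℝ := fun x => gg α x * cA α 2 1 x + dt α 3 3 x * X1 α x
def N2 : ℝ → ℝ := fun x => gg α x * cA α 2 2 x + dt α 3 3 x * X2 α x

/-- clean derivatives of the N's -/
def Nd0 : ℝ → ℝ := fun x =>
  hh α x * cA α 2 0 x + gg α x * cA α 3 0 x + 2 * dt α 3 4 x * X0 α x + dt α 3 3 x * Y0 α x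
def Nd1 : ℝ → ℝ := fun x =>
  hh α x * cA α 2 1 x + gg α x * cA α 3 1 x + 2 * dt α 3 4 x * X1 α x + dt α 3 3 x * Y1 α x
def Nd2 : ℝ → ℝ := fun x =>
  hh α x * cA α 2 2 x + gg α x * cA α 3 2 x + 2 * dt α 3 4 x * X2 α x + dt α 3 3 x * Y2 α x

def rho : ℝ → ℝ := fun x => Real.sqrt (dt α 3 3 x)

def Z0 : ℝ → ℝ := fun x => N0 α x / rho α x ^ 3
def Z1 : ℝ → ℝ := fun x => N1 α x / rho α x ^ 3
def Z2 : ℝ → ℝ := fun x => N2 α x / rho α x ^ 3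

end

theorem hdc {f : ℝ → ℝ} {a b s : ℝ} (h : HasDerivAt f a s) (e : a = b) : HasDerivAt f b s :=
  e ▸ h

variable {α : ℝ → EuclideanSpace ℝ (Fin 3)} {p q s : ℝ}

theorem hasDerivAt_cA (hα : ContDiffOn ℝ (⊤ : ℕ∞) α (Set.Ioo p q)) (n : ℕ) (i : Fin 3)
    (hs : s ∈ Set.Ioo p q) : HasDerivAt (cA α n i) (cA α (n + 1) i s) s := by
  have hO : IsOpen (Set.Ioo p q) := isOpen_Ioo
  have hne : ∀ m : ℕ, ∀ x ∈ Set.Ioo p q,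
      iteratedDerivWithin m α (Set.Ioo p q) x = iteratedDeriv m α x := by
    intro m x hx
    simp [iteratedDerivWithin, iteratedDeriv, iteratedFDerivWithin_of_isOpen m hO hx]
  have h1 : DifferentiableOn ℝ (iteratedDerivWithin n α (Set.Ioo p q)) (Set.Ioo p q) :=
    hα.differentiableOn_iteratedDerivWithin (by exact_mod_cast WithTop.coe_lt_top _)
      hO.uniqueDiffOn
  have h2 : DifferentiableAt ℝ (iteratedDerivWithin n α (Set.Ioo p q)) s :=
    (h1 s hs).differentiableAt (hO.mem_nhds hs)
  have h3 : iteratedDerivWithin n α (Set.Ioo p q) =ᶠ[nhds s] iteratedDeriv n α :=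
    Filter.eventuallyEq_of_mem (hO.mem_nhds hs) (hne n)
  have h4 : DifferentiableAt ℝ (iteratedDeriv n α) s := h2.congr_of_eventuallyEq h3.symm
  have h5 := h4.hasDerivAt
  rw [← iteratedDeriv_succ] at h5
  exact (EuclideanSpace.proj i (𝕜 := ℝ)).hasFDerivAt.comp_hasDerivAt s h5

theorem hasDerivAt_dt (hα : ContDiffOn ℝ (⊤ : ℕ∞) α (Set.Ioo p q)) (a b : ℕ)
    (hs : s ∈ Set.Ioo p q) :
    HasDerivAt (dt α a b) (dt α (a + 1) b s + dt α a (b + 1) s) s := by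
  unfold dt
  exact hdc ((((hasDerivAt_cA hα a 0 hs).mul (hasDerivAt_cA hα b 0 hs)).add
    ((hasDerivAt_cA hα a 1 hs).mul (hasDerivAt_cA hα b 1 hs))).add
    ((hasDerivAt_cA hα a 2 hs).mul (hasDerivAt_cA hα b 2 hs))) (by ring)

theorem hasDerivAt_gg (hα : ContDiffOn ℝ (⊤ : ℕ∞) α (Set.Ioo p q)) (hs : s ∈ Set.Ioo p q) :
    HasDerivAt (gg α) (hh α s) s := by
  unfold gg
  refine hdc ((((hasDerivAt_cA hα 2 0 hs).mul (((hasDerivAt_cA hα 3 1 hs).mul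
    (hasDerivAt_cA hα 4 2 hs)).sub ((hasDerivAt_cA hα 3 2 hs).mul
    (hasDerivAt_cA hα 4 1 hs)))).sub ((hasDerivAt_cA hα 2 1 hs).mul
    (((hasDerivAt_cA hα 3 0 hs).mul (hasDerivAt_cA hα 4 2 hs)).sub
    ((hasDerivAt_cA hα 3 2 hs).mul (hasDerivAt_cA hα 4 0 hs))))).add
    ((hasDerivAt_cA hα 2 2 hs).mul (((hasDerivAt_cA hα 3 0 hs).mul
    (hasDerivAt_cA hα 4 1 hs)).sub ((hasDerivAt_cA hα 3 1 hs).mul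
    (hasDerivAt_cA hα 4 0 hs))))) ?_
  simp only [hh, Pi.mul_apply, Pi.sub_apply]; ring

theorem hasDerivAt_X0 (hα : ContDiffOn ℝ (⊤ : ℕ∞) α (Set.Ioo p q)) (hs : s ∈ Set.Ioo p q) :
    HasDerivAt (X0 α) (Y0 α s) s := by
  unfold X0
  exact hdc (((hasDerivAt_cA hα 2 1 hs).mul (hasDerivAt_cA hα 3 2 hs)).sub
    ((hasDerivAt_cA hα 2 2 hs).mul (hasDerivAt_cA hα 3 1 hs))) (by simp only [Y0]; ring)

theorem hasDerivAt_X1 (hα : ContDiffOn ℝ (⊤ : ℕ∞) α (Set.Ioo p q)) (hs : s ∈ Set.Ioo p q) :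
    HasDerivAt (X1 α) (Y1 α s) s := by
  unfold X1
  exact hdc (((hasDerivAt_cA hα 2 2 hs).mul (hasDerivAt_cA hα 3 0 hs)).sub
    ((hasDerivAt_cA hα 2 0 hs).mul (hasDerivAt_cA hα 3 2 hs))) (by simp only [Y1]; ring)

theorem hasDerivAt_X2 (hα : ContDiffOn ℝ (⊤ : ℕ∞) α (Set.Ioo p q)) (hs : s ∈ Set.Ioo p q) :
    HasDerivAt (X2 α) (Y2 α s) s := by
  unfold X2
  exact hdc (((hasDerivAt_cA hα 2 0 hs).mul (hasDerivAt_cA hα 3 1 hs)).sub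
    ((hasDerivAt_cA hα 2 1 hs).mul (hasDerivAt_cA hα 3 0 hs))) (by simp only [Y2]; ring)

theorem hasDerivAt_N0 (hα : ContDiffOn ℝ (⊤ : ℕ∞) α (Set.Ioo p q)) (hs : s ∈ Set.Ioo p q) :
    HasDerivAt (N0 α) (Nd0 α s) s := by
  unfold N0
  exact hdc (((hasDerivAt_gg hα hs).mul (hasDerivAt_cA hα 2 0 hs)).add
    ((hasDerivAt_dt hα 3 3 hs).mul (hasDerivAt_X0 hα hs)))
    (by simp only [Nd0, dt]; ring)

theorem hasDerivAt_N1 (hα : ContDiffOn ℝ (⊤ : ℕ∞) α (Set.Ioo p q)) (hs : s ∈ Set.Ioo p q) :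
    HasDerivAt (N1 α) (Nd1 α s) s := by
  unfold N1
  exact hdc (((hasDerivAt_gg hα hs).mul (hasDerivAt_cA hα 2 1 hs)).add
    ((hasDerivAt_dt hα 3 3 hs).mul (hasDerivAt_X1 hα hs)))
    (by simp only [Nd1, dt]; ring)

theorem hasDerivAt_N2 (hα : ContDiffOn ℝ (⊤ : ℕ∞) α (Set.Ioo p q)) (hs : s ∈ Set.Ioo p q) :
    HasDerivAt (N2 α) (Nd2 α s) s := by
  unfold N2
  exact hdc (((hasDerivAt_gg hα hs).mul (hasDerivAt_cA hα 2 2 hs)).add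
    ((hasDerivAt_dt hα 3 3 hs).mul (hasDerivAt_X2 hα hs)))
    (by simp only [Nd2, dt]; ring)

theorem hasDerivAt_rho (hα : ContDiffOn ℝ (⊤ : ℕ∞) α (Set.Ioo p q)) (hs : s ∈ Set.Ioo p q)
    (hepos : 0 < dt α 3 3 s) :
    HasDerivAt (rho α) (dt α 3 4 s / rho α s) s := by
  unfold rho
  refine hdc ((hasDerivAt_dt hα 3 3 hs).sqrt hepos.ne') ?_
  have h1 : Real.sqrt (dt α 3 3 s) ≠ 0 := by positivity
  have h2 : dt α 4 3 s = dt α 3 4 s := by simp only [dt]; ring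
  rw [h2]
  field_simp
  ring

/-- derivative-zero from local constancy on an open interval -/
theorem derivZero {F G : ℝ → ℝ} {C : ℝ}
    (hF : ∀ x ∈ Set.Ioo p q, HasDerivAt F (G x) x)
    (hC : ∀ x ∈ Set.Ioo p q, F x = C) : ∀ x ∈ Set.Ioo p q, G x = 0 := by
  intro x hx
  have hev : F =ᶠ[nhds x] fun _ => C :=
    Filter.eventually_of_mem (isOpen_Ioo.mem_nhds hx) hC
  have h2 : HasDerivAt (fun _ : ℝ => C) (G x) x :=
    (hF x hx).congr_of_eventuallyEq hev.symm
  exact h2.unique (hasDerivAt_const x C)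

/-- constancy from zero derivative on an open interval -/
theorem constOf {F G : ℝ → ℝ}
    (hF : ∀ x ∈ Set.Ioo p q, HasDerivAt F (G x) x)
    (hG : ∀ x ∈ Set.Ioo p q, G x = 0) {x y : ℝ}
    (hx : x ∈ Set.Ioo p q) (hy : y ∈ Set.Ioo p q) : F x = F y := by
  refine (convex_Ioo p q).is_const_of_fderivWithin_eq_zero
    (fun z hz => ((hF z hz).differentiableAt).differentiableWithinAt) ?_ hx hy
  intro z hz
  have h := hF z hz
  rw [hG z hz] at h
  rw [fderivWithin_of_isOpen isOpen_Ioo hz]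
  have h0 : HasFDerivAt F (0 : ℝ →L[ℝ] ℝ) z := by
    have := h.hasFDerivAt
    convert this using 1
    ext
    simp
    simp
  exact h0.fderiv

/-- generic: zero derivative of N/ρ³ given the key algebraic relation -/
theorem hasDerivAt_div_rho_zero {Nf ρf : ℝ → ℝ} {n' e f s : ℝ}
    (hN : HasDerivAt Nf n' s) (hρ : HasDerivAt ρf (f / ρf s) s)
    (hρpos : 0 < ρf s) (hsq : ρf s ^ 2 = e)
    (hkey : e * n' - 3 * (f * Nf s) = 0) :
    HasDerivAt (fun x => Nf x / ρf x ^ 3) 0 s := by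
  have h3 : HasDerivAt (fun x => ρf x ^ 3) ((3 : ℕ) * ρf s ^ 2 * (f / ρf s)) s := hρ.pow 3
  have hne : ρf s ≠ 0 := hρpos.ne'
  have h4 := hN.div h3 (by positivity)
  refine hdc h4 ?_
  rw [div_eq_zero_iff]
  left
  have h5 : (3 : ℕ) * ρf s ^ 2 * (f / ρf s) = 3 * (ρf s * f) := by
    field_simp; ring
  rw [h5]
  linear_combination ρf s * hkey + n' * ρf s * hsq

/-- the key algebraic identity (A): e·(e·h − 3·f·g) = 0 -/
theorem keyA (t0 t1 t2 u0 u1 u2 v0 v1 v2 w0 w1 w2 : ℝ)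
    (h2 : t0*u0+t1*u1+t2*u2 = 0)
    (h3 : t0*v0+t1*v1+t2*v2 = -(u0^2+u1^2+u2^2))
    (h4 : t0*w0+t1*w1+t2*w2 = -3*(u0*v0+u1*v1+u2*v2))
    (h5 : u0*(v1*w2-v2*w1) - u1*(v0*w2-v2*w0) + u2*(v0*w1-v1*w0) = 0) :
    (u0^2+u1^2+u2^2) * ((u0^2+u1^2+u2^2) * (t0*(u1*w2-u2*w1) - t1*(u0*w2-u2*w0) + t2*(u0*w1-u1*w0))
      - 3*(u0*v0+u1*v1+u2*v2) * (t0*(u1*v2-u2*v1) - t1*(u0*v2-u2*v0) + t2*(u0*v1-u1*v0))) = 0 := by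
  set e := u0^2+u1^2+u2^2 with he
  set f := u0*v0+u1*v1+u2*v2 with hf
  set g := t0*(u1*v2-u2*v1) - t1*(u0*v2-u2*v0) + t2*(u0*v1-u1*v0) with hg
  set h := t0*(u1*w2-u2*w1) - t1*(u0*w2-u2*w0) + t2*(u0*w1-u1*w0) with hh
  linear_combination (e*(t0^2+t1^2+t2^2) - (t0*u0+t1*u1+t2*u2)^2) * h5
    - (f*h - g*(w0*u0+w1*u1+w2*u2)) * h2 + e*h*h3 - e*g*h4

theorem inner3 (x y : EuclideanSpace ℝ (Fin 3)) :
    ⟪x, y⟫ = x 0 * y 0 + x 1 * y 1 + x 2 * y 2 := by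
  simp [PiLp.inner_apply, Fin.sum_univ_three]; ring

theorem det3_expand (x y z : EuclideanSpace ℝ (Fin 3)) : det3 x y z =
    x 0 * (y 1 * z 2 - y 2 * z 1) - x 1 * (y 0 * z 2 - y 2 * z 0)
      + x 2 * (y 0 * z 1 - y 1 * z 0) := by
  simp [det3, Matrix.det_fin_three]; ring

theorem dt_symm (a b : ℕ) (x : ℝ) : dt α a b x = dt α b a x := by
  simp only [dt]; ring

theorem fact22 (hκ : ∀ x ∈ Set.Ioo p q, ‖iteratedDeriv 2 α x‖ = 1) :
    ∀ x ∈ Set.Ioo p q, dt α 2 2 x = 1 := by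
  intro x hx
  have e1 : dt α 2 2 x = ⟪iteratedDeriv 2 α x, iteratedDeriv 2 α x⟫ := by
    rw [inner3]; simp only [dt, cA]
  rw [e1, real_inner_self_eq_norm_mul_norm, hκ x hx]; norm_num

theorem fact23 (hα : ContDiffOn ℝ (⊤ : ℕ∞) α (Set.Ioo p q))
    (hκ : ∀ x ∈ Set.Ioo p q, ‖iteratedDeriv 2 α x‖ = 1) :
    ∀ x ∈ Set.Ioo p q, dt α 2 3 x = 0 := by
  intro x hx
  have h := derivZero (G := fun y => dt α 3 2 y + dt α 2 3 y)
    (fun y hy => hasDerivAt_dt hα 2 2 hy) (fact22 hκ) x hx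
  have h2 := dt_symm (α := α) 3 2 x
  linarith [h, h2]

theorem fact24 (hα : ContDiffOn ℝ (⊤ : ℕ∞) α (Set.Ioo p q))
    (hκ : ∀ x ∈ Set.Ioo p q, ‖iteratedDeriv 2 α x‖ = 1) :
    ∀ x ∈ Set.Ioo p q, dt α 2 4 x = -(dt α 3 3 x) := by
  intro x hx
  have h := derivZero (G := fun y => dt α 3 3 y + dt α 2 4 y)
    (fun y hy => hasDerivAt_dt hα 2 3 hy) (fact23 hα hκ) x hx
  linarith [h]

theorem fact25 (hα : ContDiffOn ℝ (⊤ : ℕ∞) α (Set.Ioo p q))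
    (hκ : ∀ x ∈ Set.Ioo p q, ‖iteratedDeriv 2 α x‖ = 1) :
    ∀ x ∈ Set.Ioo p q, dt α 2 5 x = -3 * dt α 3 4 x := by
  intro x hx
  have hC : ∀ y ∈ Set.Ioo p q, dt α 2 4 y + dt α 3 3 y = 0 := by
    intro y hy
    have := fact24 hα hκ y hy
    linarith
  have h := derivZero (G := fun y => (dt α 3 4 y + dt α 2 5 y) + (dt α 4 3 y + dt α 3 4 y))
    (fun y hy => (hasDerivAt_dt hα 2 4 hy).add (hasDerivAt_dt hα 3 3 hy)) hC x hx
  have h2 := dt_symm (α := α) 4 3 x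
  linarith [h, h2]

theorem fact11 (hunit : ∀ x ∈ Set.Ioo p q, ‖deriv α x‖ = 1) :
    ∀ x ∈ Set.Ioo p q, dt α 1 1 x = 1 := by
  intro x hx
  have e1 : dt α 1 1 x = ⟪deriv α x, deriv α x⟫ := by
    rw [inner3]; simp only [dt, cA, iteratedDeriv_one]
  rw [e1, real_inner_self_eq_norm_mul_norm, hunit x hx]; norm_num

theorem fact13 (hα : ContDiffOn ℝ (⊤ : ℕ∞) α (Set.Ioo p q))
    (hunit : ∀ x ∈ Set.Ioo p q, ‖deriv α x‖ = 1)
    (hκ : ∀ x ∈ Set.Ioo p q, ‖iteratedDeriv 2 α x‖ = 1) :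
    ∀ x ∈ Set.Ioo p q, dt α 1 3 x = -1 := by
  intro x hx
  have h12 : ∀ y ∈ Set.Ioo p q, dt α 1 2 y = 0 := by
    intro y hy
    have h := derivZero (G := fun z => dt α 2 1 z + dt α 1 2 z)
      (fun z hz => hasDerivAt_dt hα 1 1 hz) (fact11 hunit) y hy
    have h2 := dt_symm (α := α) 2 1 y
    linarith [h, h2]
  have h := derivZero (G := fun y => dt α 2 2 y + dt α 1 3 y)
    (fun y hy => hasDerivAt_dt hα 1 2 hy) h12 x hx
  have h2 := fact22 hκ x hx
  linarith [h, h2]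

theorem factE (hα : ContDiffOn ℝ (⊤ : ℕ∞) α (Set.Ioo p q))
    (hunit : ∀ x ∈ Set.Ioo p q, ‖deriv α x‖ = 1)
    (hκ : ∀ x ∈ Set.Ioo p q, ‖iteratedDeriv 2 α x‖ = 1) :
    ∀ x ∈ Set.Ioo p q, 1 ≤ dt α 3 3 x := by
  intro x hx
  have h1 := fact11 hunit x hx
  have h2 := fact13 hα hunit hκ x hx
  simp only [dt] at h1 h2 ⊢
  set a0 := cA α 1 0 x; set a1 := cA α 1 1 x; set a2 := cA α 1 2 x
  set u0 := cA α 3 0 x; set u1 := cA α 3 1 x; set u2 := cA α 3 2 x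
  nlinarith [sq_nonneg (a0*u1 - a1*u0), sq_nonneg (a0*u2 - a2*u0), sq_nonneg (a1*u2 - a2*u1),
    sq_nonneg (a0*u0 + a1*u1 + a2*u2)]

theorem hasDerivAt_Z_zero (hα : ContDiffOn ℝ (⊤ : ℕ∞) α (Set.Ioo p q))
    (hunit : ∀ x ∈ Set.Ioo p q, ‖deriv α x‖ = 1)
    (hκ : ∀ x ∈ Set.Ioo p q, ‖iteratedDeriv 2 α x‖ = 1)
    (hdet : ∀ x ∈ Set.Ioo p q,
      det3 (iteratedDeriv 3 α x) (iteratedDeriv 4 α x) (iteratedDeriv 5 α x) = 0)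
    (hs : s ∈ Set.Ioo p q) :
    HasDerivAt (Z0 α) 0 s ∧ HasDerivAt (Z1 α) 0 s ∧ HasDerivAt (Z2 α) 0 s := by
  have h23raw : cA α 2 0 s * cA α 3 0 s + cA α 2 1 s * cA α 3 1 s + cA α 2 2 s * cA α 3 2 s = 0 := by
    have := fact23 hα hκ s hs; simp only [dt] at this; exact this
  have h24raw : cA α 2 0 s * cA α 4 0 s + cA α 2 1 s * cA α 4 1 s + cA α 2 2 s * cA α 4 2 s
      = -((cA α 3 0 s)^2 + (cA α 3 1 s)^2 + (cA α 3 2 s)^2) := by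
    have := fact24 hα hκ s hs; simp only [dt] at this; linear_combination this
  have h25raw : cA α 2 0 s * cA α 5 0 s + cA α 2 1 s * cA α 5 1 s + cA α 2 2 s * cA α 5 2 s
      = -3*(cA α 3 0 s * cA α 4 0 s + cA α 3 1 s * cA α 4 1 s + cA α 3 2 s * cA α 4 2 s) := by
    have := fact25 hα hκ s hs; simp only [dt] at this; linear_combination this
  have h5raw : cA α 3 0 s * (cA α 4 1 s * cA α 5 2 s - cA α 4 2 s * cA α 5 1 s)
      - cA α 3 1 s * (cA α 4 0 s * cA α 5 2 s - cA α 4 2 s * cA α 5 0 s)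
      + cA α 3 2 s * (cA α 4 0 s * cA α 5 1 s - cA α 4 1 s * cA α 5 0 s) = 0 := by
    have h := hdet s hs
    rw [det3_expand] at h
    exact h
  have hA' := keyA (cA α 2 0 s) (cA α 2 1 s) (cA α 2 2 s) (cA α 3 0 s) (cA α 3 1 s)
    (cA α 3 2 s) (cA α 4 0 s) (cA α 4 1 s) (cA α 4 2 s) (cA α 5 0 s) (cA α 5 1 s) (cA α 5 2 s)
    h23raw h24raw h25raw h5raw
  have hepos : 0 < dt α 3 3 s := by have := factE hα hunit hκ s hs; linarith
  have hEp : (0:ℝ) < (cA α 3 0 s)^2 + (cA α 3 1 s)^2 + (cA α 3 2 s)^2 := by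
    have h := factE hα hunit hκ s hs; simp only [dt] at h; nlinarith
  have hQraw := (mul_eq_zero.mp hA').resolve_left hEp.ne'
  have hrpos : 0 < rho α s := Real.sqrt_pos.mpr hepos
  have hsq : rho α s ^ 2 = dt α 3 3 s := Real.sq_sqrt hepos.le
  refine ⟨?_, ?_, ?_⟩
  · have hkey0 : dt α 3 3 s * Nd0 α s - 3 * (dt α 3 4 s * N0 α s) = 0 := by
      simp only [Nd0, N0, X0, Y0, gg, hh, dt]
      linear_combination (cA α 2 0 s) * hQraw
        - ((cA α 3 0 s)^2 + (cA α 3 1 s)^2 + (cA α 3 2 s)^2) *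
          (cA α 4 1 s * cA α 3 2 s - cA α 4 2 s * cA α 3 1 s) * h23raw
    unfold Z0
    exact hasDerivAt_div_rho_zero (hasDerivAt_N0 hα hs) (hasDerivAt_rho hα hs hepos)
      hrpos hsq hkey0
  · have hkey1 : dt α 3 3 s * Nd1 α s - 3 * (dt α 3 4 s * N1 α s) = 0 := by
      simp only [Nd1, N1, X1, Y1, gg, hh, dt]
      linear_combination (cA α 2 1 s) * hQraw
        - ((cA α 3 0 s)^2 + (cA α 3 1 s)^2 + (cA α 3 2 s)^2) *
          (cA α 4 2 s * cA α 3 0 s - cA α 4 0 s * cA α 3 2 s) * h23raw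
    unfold Z1
    exact hasDerivAt_div_rho_zero (hasDerivAt_N1 hα hs) (hasDerivAt_rho hα hs hepos)
      hrpos hsq hkey1
  · have hkey2 : dt α 3 3 s * Nd2 α s - 3 * (dt α 3 4 s * N2 α s) = 0 := by
      simp only [Nd2, N2, X2, Y2, gg, hh, dt]
      linear_combination (cA α 2 2 s) * hQraw
        - ((cA α 3 0 s)^2 + (cA α 3 1 s)^2 + (cA α 3 2 s)^2) *
          (cA α 4 0 s * cA α 3 1 s - cA α 4 1 s * cA α 3 0 s) * h23raw
    unfold Z2
    exact hasDerivAt_div_rho_zero (hasDerivAt_N2 hα hs) (hasDerivAt_rho hα hs hepos)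
      hrpos hsq hkey2

theorem converse_dir (hα : ContDiffOn ℝ (⊤ : ℕ∞) α (Set.Ioo p q))
    (hunit : ∀ x ∈ Set.Ioo p q, ‖deriv α x‖ = 1)
    (hκ : ∀ x ∈ Set.Ioo p q, ‖iteratedDeriv 2 α x‖ = 1)
    (hdet : ∀ x ∈ Set.Ioo p q,
      det3 (iteratedDeriv 3 α x) (iteratedDeriv 4 α x) (iteratedDeriv 5 α x) = 0)
    (hpq : p < q) :
    ∃ d : EuclideanSpace ℝ (Fin 3), ‖d‖ = 1 ∧ ∃ c : ℝ,
      ∀ s ∈ Set.Ioo p q, ⟪iteratedDeriv 2 α s, d⟫ = c := by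
  have hs₀ : (p + q) / 2 ∈ Set.Ioo p q := ⟨by linarith, by linarith⟩
  let s₀ : ℝ := (p + q) / 2
  let Mv : EuclideanSpace ℝ (Fin 3) := !₂[N0 α s₀, N1 α s₀, N2 α s₀]
  -- norm of Mv is at least 1
  have hMM : ⟪Mv, Mv⟫ = gg α s₀ ^ 2 * dt α 2 2 s₀
      + dt α 3 3 s₀ ^ 2 * (dt α 2 2 s₀ * dt α 3 3 s₀ - dt α 2 3 s₀ ^ 2) := by
    rw [inner3]
    show N0 α s₀ * N0 α s₀ + N1 α s₀ * N1 α s₀ + N2 α s₀ * N2 α s₀ = _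
    simp only [N0, N1, N2, X0, X1, X2, gg, dt]
    ring
  have hMMge : 1 ≤ ⟪Mv, Mv⟫ := by
    rw [hMM, fact22 hκ s₀ hs₀, fact23 hα hκ s₀ hs₀]
    have hE := factE hα hunit hκ s₀ hs₀
    nlinarith [sq_nonneg (gg α s₀)]
  have hMvne : Mv ≠ 0 := by
    intro h
    rw [h] at hMMge
    simp only [inner_zero_left] at hMMge
    linarith
  have hnpos : 0 < ‖Mv‖ := norm_pos_iff.mpr hMvne
  refine ⟨‖Mv‖⁻¹ • Mv, ?_, ⟪iteratedDeriv 2 α s₀, ‖Mv‖⁻¹ • Mv⟫, ?_⟩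
  · rw [norm_smul, norm_inv, norm_norm, inv_mul_cancel₀ hnpos.ne']
  set d : EuclideanSpace ℝ (Fin 3) := ‖Mv‖⁻¹ • Mv with hddef
  have hd0 : d 0 = ‖Mv‖⁻¹ * N0 α s₀ := rfl
  have hd1' : d 1 = ‖Mv‖⁻¹ * N1 α s₀ := rfl
  have hd2' : d 2 = ‖Mv‖⁻¹ * N2 α s₀ := rfl
  -- derivative of ⟪t, d⟫ vanishes
  have hG0 : ∀ x ∈ Set.Ioo p q,
      cA α 3 0 x * d 0 + cA α 3 1 x * d 1 + cA α 3 2 x * d 2 = 0 := by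
    intro x hx
    have hex : 0 < dt α 3 3 x := by have := factE hα hunit hκ x hx; linarith
    have hex0 : 0 < dt α 3 3 s₀ := by have := factE hα hunit hκ s₀ hs₀; linarith
    have hrx : 0 < rho α x := Real.sqrt_pos.mpr hex
    have hr0 : 0 < rho α s₀ := Real.sqrt_pos.mpr hex0
    have hZ0c : Z0 α x = Z0 α s₀ := constOf (G := fun _ => (0:ℝ))
      (fun y hy => (hasDerivAt_Z_zero hα hunit hκ hdet hy).1) (fun _ _ => rfl) hx hs₀
    have hZ1c : Z1 α x = Z1 α s₀ := constOf (G := fun _ => (0:ℝ))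
      (fun y hy => (hasDerivAt_Z_zero hα hunit hκ hdet hy).2.1) (fun _ _ => rfl) hx hs₀
    have hZ2c : Z2 α x = Z2 α s₀ := constOf (G := fun _ => (0:ℝ))
      (fun y hy => (hasDerivAt_Z_zero hα hunit hκ hdet hy).2.2) (fun _ _ => rfl) hx hs₀
    simp only [Z0, Z1, Z2] at hZ0c hZ1c hZ2c
    have hcross0 : N0 α s₀ * rho α x ^ 3 = N0 α x * rho α s₀ ^ 3 :=
      ((div_eq_div_iff (by positivity) (by positivity)).mp hZ0c).symm
    have hcross1 : N1 α s₀ * rho α x ^ 3 = N1 α x * rho α s₀ ^ 3 :=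
      ((div_eq_div_iff (by positivity) (by positivity)).mp hZ1c).symm
    have hcross2 : N2 α s₀ * rho α x ^ 3 = N2 α x * rho α s₀ ^ 3 :=
      ((div_eq_div_iff (by positivity) (by positivity)).mp hZ2c).symm
    have hsum : cA α 3 0 x * N0 α x + cA α 3 1 x * N1 α x + cA α 3 2 x * N2 α x
        = gg α x * dt α 2 3 x := by
      simp only [N0, N1, N2, X0, X1, X2, gg, dt]
      ring
    have hkey : (cA α 3 0 x * N0 α s₀ + cA α 3 1 x * N1 α s₀ + cA α 3 2 x * N2 α s₀)
        * rho α x ^ 3 = gg α x * dt α 2 3 x * rho α s₀ ^ 3 := by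
      linear_combination cA α 3 0 x * hcross0 + cA α 3 1 x * hcross1
        + cA α 3 2 x * hcross2 + rho α s₀ ^ 3 * hsum
    rw [fact23 hα hκ x hx] at hkey
    have hS : cA α 3 0 x * N0 α s₀ + cA α 3 1 x * N1 α s₀ + cA α 3 2 x * N2 α s₀ = 0 := by
      have h3 : rho α x ^ 3 ≠ 0 := by positivity
      have := mul_eq_zero.mp (by linarith [hkey] : (cA α 3 0 x * N0 α s₀ + cA α 3 1 x * N1 α s₀
        + cA α 3 2 x * N2 α s₀) * rho α x ^ 3 = 0)
      exact this.resolve_right h3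
    rw [hd0, hd1', hd2']
    linear_combination ‖Mv‖⁻¹ * hS
  intro s hs
  have hder : ∀ x ∈ Set.Ioo p q, HasDerivAt
      (fun y => cA α 2 0 y * d 0 + cA α 2 1 y * d 1 + cA α 2 2 y * d 2)
      (cA α 3 0 x * d 0 + cA α 3 1 x * d 1 + cA α 3 2 x * d 2) x := fun x hx =>
    (((hasDerivAt_cA hα 2 0 hx).mul_const _).add
      ((hasDerivAt_cA hα 2 1 hx).mul_const _)).add ((hasDerivAt_cA hα 2 2 hx).mul_const _)
  have hconst := constOf (G := fun x => cA α 3 0 x * d 0 + cA α 3 1 x * d 1 + cA α 3 2 x * d 2)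
    hder hG0 hs hs₀
  have e1 : ⟪iteratedDeriv 2 α s, d⟫
      = cA α 2 0 s * d 0 + cA α 2 1 s * d 1 + cA α 2 2 s * d 2 := by
    rw [inner3]; rfl
  have e2 : ⟪iteratedDeriv 2 α s₀, d⟫
      = cA α 2 0 s₀ * d 0 + cA α 2 1 s₀ * d 1 + cA α 2 2 s₀ * d 2 := by
    rw [inner3]; rfl
  rw [e1, e2]
  exact hconst

theorem forward_dir (hα : ContDiffOn ℝ (⊤ : ℕ∞) α (Set.Ioo p q))
    (d : EuclideanSpace ℝ (Fin 3)) (hd1 : ‖d‖ = 1) (c : ℝ)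
    (hc : ∀ x ∈ Set.Ioo p q, ⟪iteratedDeriv 2 α x, d⟫ = c) :
    ∀ s ∈ Set.Ioo p q,
      det3 (iteratedDeriv 3 α s) (iteratedDeriv 4 α s) (iteratedDeriv 5 α s) = 0 := by
  have hφc : ∀ x ∈ Set.Ioo p q,
      cA α 2 0 x * d 0 + cA α 2 1 x * d 1 + cA α 2 2 x * d 2 = c := by
    intro x hx
    have h := hc x hx
    rw [inner3] at h
    exact h
  have h3d := derivZero (G := fun x => cA α 3 0 x * d 0 + cA α 3 1 x * d 1 + cA α 3 2 x * d 2)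
    (fun x hx => (((hasDerivAt_cA hα 2 0 hx).mul_const _).add
      ((hasDerivAt_cA hα 2 1 hx).mul_const _)).add ((hasDerivAt_cA hα 2 2 hx).mul_const _)) hφc
  have h4d := derivZero (G := fun x => cA α 4 0 x * d 0 + cA α 4 1 x * d 1 + cA α 4 2 x * d 2)
    (fun x hx => (((hasDerivAt_cA hα 3 0 hx).mul_const _).add
      ((hasDerivAt_cA hα 3 1 hx).mul_const _)).add ((hasDerivAt_cA hα 3 2 hx).mul_const _)) h3d
  have h5d := derivZero (G := fun x => cA α 5 0 x * d 0 + cA α 5 1 x * d 1 + cA α 5 2 x * d 2)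
    (fun x hx => (((hasDerivAt_cA hα 4 0 hx).mul_const _).add
      ((hasDerivAt_cA hα 4 1 hx).mul_const _)).add ((hasDerivAt_cA hα 4 2 hx).mul_const _)) h4d
  have hdd : d 0 ^ 2 + d 1 ^ 2 + d 2 ^ 2 = 1 := by
    have h : ⟪d, d⟫ = 1 := by
      rw [real_inner_self_eq_norm_mul_norm, hd1]; norm_num
    rw [inner3] at h
    linear_combination h
  intro s hs
  have h3 := h3d s hs
  have h4 := h4d s hs
  have h5 := h5d s hs
  simp only [cA] at h3 h4 h5
  rw [det3_expand]
  set u0 := iteratedDeriv 3 α s 0; set u1 := iteratedDeriv 3 α s 1; set u2 := iteratedDeriv 3 α s 2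
  set v0 := iteratedDeriv 4 α s 0; set v1 := iteratedDeriv 4 α s 1; set v2 := iteratedDeriv 4 α s 2
  set w0 := iteratedDeriv 5 α s 0; set w1 := iteratedDeriv 5 α s 1; set w2 := iteratedDeriv 5 α s 2
  linear_combination
    (d 0 * (v1*w2 - v2*w1) + d 1 * (v2*w0 - v0*w2) + d 2 * (v0*w1 - v1*w0)) * h3
    + (d 0 * (w1*u2 - w2*u1) + d 1 * (w2*u0 - w0*u2) + d 2 * (w0*u1 - w1*u0)) * h4
    + (d 0 * (u1*v2 - u2*v1) + d 1 * (u2*v0 - u0*v2) + d 2 * (u0*v1 - u1*v0)) * h5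
    - (u0*(v1*w2 - v2*w1) - u1*(v0*w2 - v2*w0) + u2*(v0*w1 - v1*w0)) * hdd

end SphHelixAux

open SphHelixAux in
/-- For a smooth unit-speed curve in `E³` with constant curvature `κ ≡ 1`, the tangent
indicatrix `T = α'` is a spherical helix iff `det(α⁽³⁾, α⁽⁴⁾, α⁽⁵⁾) = 0` on `I`. -/
theorem stmt_0 (p q : ℝ) (α : ℝ → EuclideanSpace ℝ (Fin 3))
    (hα : ContDiffOn ℝ (⊤ : ℕ∞) α (Set.Ioo p q))
    (hunit : ∀ s ∈ Set.Ioo p q, ‖deriv α s‖ = 1)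
    (hκ : ∀ s ∈ Set.Ioo p q, ‖iteratedDeriv 2 α s‖ = 1) :
    (∃ d : EuclideanSpace ℝ (Fin 3), ‖d‖ = 1 ∧ ∃ c : ℝ,
        ∀ s ∈ Set.Ioo p q, ⟪iteratedDeriv 2 α s, d⟫ = c) ↔
      (∀ s ∈ Set.Ioo p q,
        det3 (iteratedDeriv 3 α s) (iteratedDeriv 4 α s) (iteratedDeriv 5 α s) = 0) := by
  constructor
  · rintro ⟨d, hd1, c, hc⟩
    exact forward_dir hα d hd1 c hc
  · intro hdet
    by_cases hpq : p < q
    · exact converse_dir hα hunit hκ hdet hpq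
    · refine ⟨(show EuclideanSpace ℝ (Fin 3) from !₂[1, 0, 0]), ?_, 0, ?_⟩
      · rw [EuclideanSpace.norm_eq]
        norm_num [Fin.sum_univ_three, Matrix.cons_val]
        rfl
      · intro s hs
        rw [Set.Ioo_eq_empty hpq] at hs
        exact absurd hs (Set.notMem_empty s)
end

section
/- Let α be a smooth unit-speed curve in E³ defined on an open interval I with constant curvature κ ≡ 1, and let τ(s) = det(α'(s), α''(s), α'''(s)) be its torsion. Then the tangent indicatrix T = α' of α is a spherical helix (i.e. there exist a unit vector d and a constant c with ⟪α''(s), d⟫ = c for all s ∈ I) if and only if the torsion satisfies the differential equation 2·τ''(s)·(1 + τ(s)²) − 3·τ'(s)·(1 + τ(s)²)' = 0 for all s ∈ I. -/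
open scoped RealInnerProductSpace

namespace SphericalHelix

abbrev E3 := EuclideanSpace ℝ (Fin 3)

noncomputable def cross3 (u v : E3) : E3 :=
  WithLp.toLp 2 ![u 1 * v 2 - u 2 * v 1, u 2 * v 0 - u 0 * v 2, u 0 * v 1 - u 1 * v 0]

@[simp] lemma cross3_0 (u v : E3) : cross3 u v 0 = u 1 * v 2 - u 2 * v 1 := rfl
@[simp] lemma cross3_1 (u v : E3) : cross3 u v 1 = u 2 * v 0 - u 0 * v 2 := rfl
@[simp] lemma cross3_2 (u v : E3) : cross3 u v 2 = u 0 * v 1 - u 1 * v 0 := rfl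

lemma inner3 (u v : E3) : ⟪u, v⟫ = u 0 * v 0 + u 1 * v 1 + u 2 * v 2 := by
  simp [PiLp.inner_apply, Fin.sum_univ_three]; ring

lemma det3_eq (u v w : E3) : det3 u v w = ⟪cross3 u v, w⟫ := by
  rw [inner3]; simp [det3, Matrix.det_fin_three]; ring

lemma inner_cross_left (u v : E3) : ⟪cross3 u v, u⟫ = 0 := by rw [inner3]; simp; ring
lemma inner_cross_right (u v : E3) : ⟪cross3 u v, v⟫ = 0 := by rw [inner3]; simp; ring

lemma cross3_self (u : E3) : cross3 u u = 0 := by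
  ext i
  obtain (rfl | rfl | rfl) : i = 0 ∨ i = 1 ∨ i = 2 := by omega
  all_goals simp; ring

lemma inner_cross_cross (u v : E3) :
    ⟪cross3 u v, cross3 u v⟫ = ⟪u,u⟫ * ⟪v,v⟫ - ⟪u,v⟫ ^ 2 := by
  simp only [inner3]; simp; ring

lemma cross3_combo (u v : E3) (a b g : ℝ) :
    cross3 u (a • u + b • v + g • cross3 u v)
      = b • cross3 u v + (g * ⟪u,v⟫) • u - (g * ⟪u,u⟫) • v := by
  simp only [inner3]
  ext i
  obtain (rfl | rfl | rfl) : i = 0 ∨ i = 1 ∨ i = 2 := by omega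
  all_goals
    simp [cross3, PiLp.add_apply, PiLp.smul_apply, PiLp.sub_apply, smul_eq_mul]
  all_goals ring

lemma decomp (u v w : E3) (a b g : ℝ)
    (huu : ⟪u,u⟫ = 1) (hvv : ⟪v,v⟫ = 1) (huv : ⟪u,v⟫ = 0)
    (ha : ⟪w,u⟫ = a) (hb : ⟪w,v⟫ = b) (hg : ⟪w, cross3 u v⟫ = g) :
    w = a • u + b • v + g • cross3 u v := by
  simp only [inner3, cross3_0, cross3_1, cross3_2] at huu hvv huv ha hb hg
  ext i
  obtain (rfl | rfl | rfl) : i = 0 ∨ i = 1 ∨ i = 2 := by omega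
  all_goals simp only [PiLp.add_apply, PiLp.smul_apply,
      smul_eq_mul, cross3_0, cross3_1, cross3_2]
  · linear_combination (u 0 * (v 0*v 0+v 1*v 1+v 2*v 2) - v 0 * (u 0*v 0+u 1*v 1+u 2*v 2)) * ha
      + (v 0 * (u 0*u 0+u 1*u 1+u 2*u 2) - u 0 * (u 0*v 0+u 1*v 1+u 2*v 2)) * hb
      + (u 1*v 2 - u 2*v 1) * hg
      + (-(w 0) * (v 0*v 0+v 1*v 1+v 2*v 2) + b * v 0) * huu
      + (-(w 0) + a * u 0) * hvv
      + (w 0 * (u 0*v 0+u 1*v 1+u 2*v 2) - a * v 0 - b * u 0) * huv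
  · linear_combination (u 1 * (v 0*v 0+v 1*v 1+v 2*v 2) - v 1 * (u 0*v 0+u 1*v 1+u 2*v 2)) * ha
      + (v 1 * (u 0*u 0+u 1*u 1+u 2*u 2) - u 1 * (u 0*v 0+u 1*v 1+u 2*v 2)) * hb
      + (u 2*v 0 - u 0*v 2) * hg
      + (-(w 1) * (v 0*v 0+v 1*v 1+v 2*v 2) + b * v 1) * huu
      + (-(w 1) + a * u 1) * hvv
      + (w 1 * (u 0*v 0+u 1*v 1+u 2*v 2) - a * v 1 - b * u 1) * huv
  · linear_combination (u 2 * (v 0*v 0+v 1*v 1+v 2*v 2) - v 2 * (u 0*v 0+u 1*v 1+u 2*v 2)) * ha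
      + (v 2 * (u 0*u 0+u 1*u 1+u 2*u 2) - u 2 * (u 0*v 0+u 1*v 1+u 2*v 2)) * hb
      + (u 0*v 1 - u 1*v 0) * hg
      + (-(w 2) * (v 0*v 0+v 1*v 1+v 2*v 2) + b * v 2) * huu
      + (-(w 2) + a * u 2) * hvv
      + (w 2 * (u 0*v 0+u 1*v 1+u 2*v 2) - a * v 2 - b * u 2) * huv

lemma hasDerivAt_E3 {f : ℝ → E3} {v : E3} {s : ℝ}
    (h : ∀ i, HasDerivAt (fun t => f t i) (v i) s) : HasDerivAt f v s := by
  have h2 : HasDerivAt (fun t => (fun i => f t i : Fin 3 → ℝ)) (fun i => v i) s :=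
    hasDerivAt_pi.mpr h
  exact (((PiLp.continuousLinearEquiv 2 ℝ (fun _ : Fin 3 => ℝ)).symm :
    (Fin 3 → ℝ) →L[ℝ] E3).hasFDerivAt).comp_hasDerivAt s h2

lemma hasDerivAt_E3_comp {f : ℝ → E3} {v : E3} {s : ℝ} (h : HasDerivAt f v s) (i : Fin 3) :
    HasDerivAt (fun t => f t i) (v i) s :=
  (EuclideanSpace.proj i : E3 →L[ℝ] ℝ).hasFDerivAt.comp_hasDerivAt s h

lemma hasDerivAt_cross3 {f g : ℝ → E3} {u v : E3} {s : ℝ}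
    (hf : HasDerivAt f u s) (hg : HasDerivAt g v s) :
    HasDerivAt (fun t => cross3 (f t) (g t)) (cross3 u (g s) + cross3 (f s) v) s := by
  apply hasDerivAt_E3
  intro i
  have F0 := hasDerivAt_E3_comp hf 0; have F1 := hasDerivAt_E3_comp hf 1
  have F2 := hasDerivAt_E3_comp hf 2
  have G0 := hasDerivAt_E3_comp hg 0; have G1 := hasDerivAt_E3_comp hg 1
  have G2 := hasDerivAt_E3_comp hg 2
  obtain (rfl | rfl | rfl) : i = 0 ∨ i = 1 ∨ i = 2 := by omega
  · simp only [cross3_0, PiLp.add_apply]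
    exact ((F1.mul G2).sub (F2.mul G1)).congr_deriv (by simp [cross3]; ring)
  · simp only [cross3_1, PiLp.add_apply]
    exact ((F2.mul G0).sub (F0.mul G2)).congr_deriv (by simp [cross3]; ring)
  · simp only [cross3_2, PiLp.add_apply]
    exact ((F0.mul G1).sub (F1.mul G0)).congr_deriv (by simp [cross3]; ring)

lemma deriv_eq_on_open {F : Type*} [NormedAddCommGroup F] [NormedSpace ℝ F]
    {f g : ℝ → F} {vf vg : F} {s : ℝ} {U : Set ℝ} (hU : IsOpen U) (hs : s ∈ U)
    (hf : HasDerivAt f vf s) (hg : HasDerivAt g vg s) (hfg : ∀ x ∈ U, f x = g x) :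
    vf = vg := by
  have : HasDerivAt g vf s :=
    hf.congr_of_eventuallyEq (Filter.eventuallyEq_of_mem (hU.mem_nhds hs)
      (fun x hx => (hfg x hx).symm))
  exact this.unique hg

lemma const_on_open {F : Type*} [NormedAddCommGroup F] [NormedSpace ℝ F]
    {f : ℝ → F} {U : Set ℝ} (hU : IsOpen U) (hC : Convex ℝ U)
    (hf : ∀ x ∈ U, HasDerivAt f 0 x) {x y : ℝ} (hx : x ∈ U) (hy : y ∈ U) : f x = f y := by
  apply hC.is_const_of_fderivWithin_eq_zero
    (fun z hz => (hf z hz).differentiableAt.differentiableWithinAt) _ hx hy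
  intro z hz
  rw [fderivWithin_of_isOpen hU hz, (hf z hz).hasFDerivAt.fderiv]
  ext t
  simp

end SphericalHelix

set_option maxHeartbeats 1000000 in
open SphericalHelix in
/-- For a smooth unit-speed curve in `E³` with constant curvature `κ ≡ 1` and torsion
`τ = det(α', α'', α''')`, the tangent indicatrix is a spherical helix iff
`2·τ''·(1 + τ²) − 3·τ'·(1 + τ²)' = 0` on `I`. -/
theorem stmt_1 (p q : ℝ) (α : ℝ → EuclideanSpace ℝ (Fin 3))
    (hα : ContDiffOn ℝ (⊤ : ℕ∞) α (Set.Ioo p q))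
    (hunit : ∀ s ∈ Set.Ioo p q, ‖deriv α s‖ = 1)
    (hκ : ∀ s ∈ Set.Ioo p q, ‖iteratedDeriv 2 α s‖ = 1)
    (τ : ℝ → ℝ)
    (hτ : ∀ s ∈ Set.Ioo p q,
      τ s = det3 (deriv α s) (iteratedDeriv 2 α s) (iteratedDeriv 3 α s)) :
    (∃ d : EuclideanSpace ℝ (Fin 3), ‖d‖ = 1 ∧ ∃ c : ℝ,
        ∀ s ∈ Set.Ioo p q, ⟪iteratedDeriv 2 α s, d⟫ = c) ↔
      (∀ s ∈ Set.Ioo p q,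
        2 * deriv (deriv τ) s * (1 + τ s ^ 2)
          - 3 * deriv τ s * deriv (fun u => 1 + τ u ^ 2) s = 0) := by
  have hIo : IsOpen (Set.Ioo p q) := isOpen_Ioo
  have hIc : Convex ℝ (Set.Ioo p q) := convex_Ioo p q
  set I := Set.Ioo p q with hIdef
  -- smoothness tower
  have hA : ContDiffOn ℝ (⊤ : ℕ∞) α I := hα.of_le (by simp)
  obtain ⟨hdα, hcT⟩ := (contDiffOn_infty_iff_deriv_of_isOpen hIo).mp hA
  set T := deriv α with hTdef
  obtain ⟨hdT, hcN⟩ := (contDiffOn_infty_iff_deriv_of_isOpen hIo).mp hcT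
  set N := deriv T with hNdef
  obtain ⟨hdN, hcD3⟩ := (contDiffOn_infty_iff_deriv_of_isOpen hIo).mp hcN
  set D3 := deriv N with hD3def
  obtain ⟨hdD3, hcD4⟩ := (contDiffOn_infty_iff_deriv_of_isOpen hIo).mp hcD3
  set D4 := deriv D3 with hD4def
  obtain ⟨hdD4, _hcD5⟩ := (contDiffOn_infty_iff_deriv_of_isOpen hIo).mp hcD4
  set D5 := deriv D4 with hD5def
  have HDα : ∀ s ∈ I, HasDerivAt α (T s) s :=
    fun s hs => (hdα.differentiableAt (hIo.mem_nhds hs)).hasDerivAt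
  have HDT : ∀ s ∈ I, HasDerivAt T (N s) s :=
    fun s hs => (hdT.differentiableAt (hIo.mem_nhds hs)).hasDerivAt
  have HDN : ∀ s ∈ I, HasDerivAt N (D3 s) s :=
    fun s hs => (hdN.differentiableAt (hIo.mem_nhds hs)).hasDerivAt
  have HDD3 : ∀ s ∈ I, HasDerivAt D3 (D4 s) s :=
    fun s hs => (hdD3.differentiableAt (hIo.mem_nhds hs)).hasDerivAt
  have HDD4 : ∀ s ∈ I, HasDerivAt D4 (D5 s) s :=
    fun s hs => (hdD4.differentiableAt (hIo.mem_nhds hs)).hasDerivAt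
  -- bridge iterated derivatives
  have e2 : iteratedDeriv 2 α = N := by
    rw [iteratedDeriv_succ, iteratedDeriv_one, hNdef, hTdef]
  have e3 : iteratedDeriv 3 α = D3 := by
    rw [iteratedDeriv_succ, e2, hD3def]
  simp only [e2, e3] at hκ hτ ⊢
  -- Frenet frame facts
  have hT1 : ∀ s ∈ I, ⟪T s, T s⟫ = 1 := by
    intro s hs; rw [real_inner_self_eq_norm_sq, hunit s hs]; norm_num
  have hN1 : ∀ s ∈ I, ⟪N s, N s⟫ = 1 := by
    intro s hs; rw [real_inner_self_eq_norm_sq, hκ s hs]; norm_num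
  have hTN : ∀ s ∈ I, ⟪T s, N s⟫ = 0 := by
    intro s hs
    have h1 : HasDerivAt (fun t => ⟪T t, T t⟫) (⟪T s, N s⟫ + ⟪N s, T s⟫) s :=
      (HDT s hs).inner ℝ (HDT s hs)
    have h2 := deriv_eq_on_open hIo hs h1 (hasDerivAt_const s (1 : ℝ)) hT1
    have h3 := real_inner_comm (N s) (T s)
    linarith [h2]
  have hND3 : ∀ s ∈ I, ⟪N s, D3 s⟫ = 0 := by
    intro s hs
    have h1 : HasDerivAt (fun t => ⟪N t, N t⟫) (⟪N s, D3 s⟫ + ⟪D3 s, N s⟫) s :=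
      (HDN s hs).inner ℝ (HDN s hs)
    have h2 := deriv_eq_on_open hIo hs h1 (hasDerivAt_const s (1 : ℝ)) hN1
    have h3 := real_inner_comm (D3 s) (N s)
    linarith [h2]
  have hTD3 : ∀ s ∈ I, ⟪T s, D3 s⟫ = -1 := by
    intro s hs
    have h1 : HasDerivAt (fun t => ⟪T t, N t⟫) (⟪T s, D3 s⟫ + ⟪N s, N s⟫) s :=
      (HDT s hs).inner ℝ (HDN s hs)
    have h2 := deriv_eq_on_open hIo hs h1 (hasDerivAt_const s (0 : ℝ)) hTN
    have h3 := hN1 s hs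
    linarith [h2]
  set B : ℝ → E3 := fun s => cross3 (T s) (N s) with hBdef
  have hBT : ∀ s, ⟪B s, T s⟫ = 0 := fun s => inner_cross_left (T s) (N s)
  have hBN : ∀ s, ⟪B s, N s⟫ = 0 := fun s => inner_cross_right (T s) (N s)
  have hBB : ∀ s ∈ I, ⟪B s, B s⟫ = 1 := by
    intro s hs
    rw [hBdef]
    rw [inner_cross_cross, hT1 s hs, hN1 s hs, hTN s hs]
    norm_num
  set τt : ℝ → ℝ := fun s => ⟪B s, D3 s⟫ with hτtdef
  have hττ : ∀ s ∈ I, τ s = τt s := by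
    intro s hs
    rw [hτ s hs, det3_eq]
  have hD3dec : ∀ s ∈ I, D3 s = (-1 : ℝ) • T s + (0 : ℝ) • N s + τt s • B s := by
    intro s hs
    exact decomp (T s) (N s) (D3 s) (-1) 0 (τt s) (hT1 s hs) (hN1 s hs) (hTN s hs)
      (by rw [real_inner_comm]; exact hTD3 s hs)
      (by rw [real_inner_comm]; exact hND3 s hs)
      (by rw [real_inner_comm])
  have HDB : ∀ s ∈ I, HasDerivAt B (-(τt s) • N s) s := by
    intro s hs
    have h1 := hasDerivAt_cross3 (HDT s hs) (HDN s hs)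
    have h2 : cross3 (N s) (N s) + cross3 (T s) (D3 s) = -(τt s) • N s := by
      rw [cross3_self, hD3dec s hs, cross3_combo, hTN s hs, hT1 s hs]
      simp
    rw [h2] at h1
    exact h1
  have HDτt : ∀ s ∈ I, HasDerivAt τt (⟪B s, D4 s⟫) s := by
    intro s hs
    have h1 := (HDB s hs).inner ℝ (HDD3 s hs)
    have h2 : ⟪B s, D4 s⟫ + ⟪-(τt s) • N s, D3 s⟫ = ⟪B s, D4 s⟫ := by
      rw [real_inner_smul_left, hND3 s hs]; ring
    rw [h2] at h1
    exact h1
  set τ1 : ℝ → ℝ := fun s => ⟪B s, D4 s⟫ with hτ1def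
  set τ2 : ℝ → ℝ := fun s => ⟪B s, D5 s⟫ - τt s * ⟪N s, D4 s⟫ with hτ2def
  have HDτ1 : ∀ s ∈ I, HasDerivAt τ1 (τ2 s) s := by
    intro s hs
    have h1 := (HDB s hs).inner ℝ (HDD4 s hs)
    have h2 : ⟪B s, D5 s⟫ + ⟪-(τt s) • N s, D4 s⟫ = τ2 s := by
      rw [real_inner_smul_left, hτ2def]; ring
    rw [h2] at h1
    exact h1
  have hτdiff : ∀ s ∈ I, HasDerivAt τ (τ1 s) s := by
    intro s hs
    exact (HDτt s hs).congr_of_eventuallyEq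
      (Filter.eventuallyEq_of_mem (hIo.mem_nhds hs) (fun x hx => hττ x hx))
  have hdτ : ∀ s ∈ I, deriv τ s = τ1 s := fun s hs => (hτdiff s hs).deriv
  have hddτ : ∀ s ∈ I, deriv (deriv τ) s = τ2 s := by
    intro s hs
    exact ((HDτ1 s hs).congr_of_eventuallyEq
      (Filter.eventuallyEq_of_mem (hIo.mem_nhds hs) (fun x hx => hdτ x hx))).deriv
  have hsq : ∀ s ∈ I, deriv (fun u => 1 + τ u ^ 2) s = 2 * τt s * τ1 s := by
    intro s hs
    have h1 := ((hτdiff s hs).pow 2).const_add (1 : ℝ)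
    rw [show (fun u => 1 + τ u ^ 2) = fun x => 1 + (τ ^ 2) x from rfl, h1.deriv, hττ s hs]
    norm_num
  constructor
  · -- forward direction
    rintro ⟨d, hd1, c, hdc⟩ s hs
    have HDBf : ∀ x ∈ I, HasDerivAt (fun t => ⟪B t, d⟫) (-(τt x * c)) x := by
      intro x hx
      have h1 := (HDB x hx).inner ℝ (hasDerivAt_const x d)
      have h2 : ⟪B x, (0 : E3)⟫ + ⟪-(τt x) • N x, d⟫ = -(τt x * c) := by
        rw [real_inner_smul_left, hdc x hx]; simp
      rw [h2] at h1
      exact h1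
    have hD3d : ∀ x ∈ I, ⟪D3 x, d⟫ = 0 := by
      intro x hx
      have h1 : HasDerivAt (fun t => ⟪N t, d⟫) (⟪N x, (0 : E3)⟫ + ⟪D3 x, d⟫) x :=
        (HDN x hx).inner ℝ (hasDerivAt_const x d)
      have h2 := deriv_eq_on_open hIo hx h1 (hasDerivAt_const x c) hdc
      simpa using h2
    have G1 : ∀ x ∈ I, ⟪T x, d⟫ = τt x * ⟪B x, d⟫ := by
      intro x hx
      have h0 := hD3d x hx
      rw [hD3dec x hx] at h0
      simp only [inner_add_left, real_inner_smul_left] at h0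
      linarith [h0]
    have G2 : ∀ x ∈ I, τ1 x * ⟪B x, d⟫ = c * (1 + τt x ^ 2) := by
      intro x hx
      have h1 : HasDerivAt (fun t => ⟪T t, d⟫) (⟪T x, (0 : E3)⟫ + ⟪N x, d⟫) x :=
        (HDT x hx).inner ℝ (hasDerivAt_const x d)
      have h2 : HasDerivAt (fun t => τt t * ⟪B t, d⟫)
          (⟪B x, D4 x⟫ * ⟪B x, d⟫ + τt x * (-(τt x * c))) x :=
        (HDτt x hx).mul (HDBf x hx)
      have h3 := deriv_eq_on_open hIo hx h1 h2 G1
      rw [hdc x hx] at h3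
      simp only [inner_zero_right] at h3
      linear_combination -h3
    have G3 : τ2 s * ⟪B s, d⟫ = 3 * c * τt s * τ1 s := by
      have h1 : HasDerivAt (fun t => τ1 t * ⟪B t, d⟫)
          (τ2 s * ⟪B s, d⟫ + τ1 s * (-(τt s * c))) s :=
        (HDτ1 s hs).mul (HDBf s hs)
      have h2 : HasDerivAt (fun t => c * (1 + τt t ^ 2)) (c * (2 * τt s * τ1 s)) s := by
        have h3 := (((HDτt s hs).pow 2).const_add (1 : ℝ)).const_mul c
        norm_num at h3
        convert h3 using 1
        try ring
      have h3 := deriv_eq_on_open hIo hs h1 h2 G2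
      linear_combination h3
    have G4 : ⟪T s, d⟫ ^ 2 + c ^ 2 + ⟪B s, d⟫ ^ 2 = 1 := by
      have hdec := decomp (T s) (N s) d (⟪T s, d⟫) c (⟪B s, d⟫) (hT1 s hs) (hN1 s hs)
        (hTN s hs) (real_inner_comm (T s) d)
        (by rw [real_inner_comm]; exact hdc s hs)
        (real_inner_comm (cross3 (T s) (N s)) d)
      have h1 : ⟪d, d⟫ = 1 := by
        rw [real_inner_self_eq_norm_sq, hd1]; norm_num
      have h2 : ⟪(⟪T s, d⟫ • T s + c • N s + ⟪B s, d⟫ • B s : E3), d⟫ = 1 := by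
        rw [← hdec]; exact h1
      simp only [inner_add_left, real_inner_smul_left] at h2
      rw [hdc s hs] at h2
      linear_combination h2
    have hBf0 : ⟪B s, d⟫ ≠ 0 := by
      intro h0
      have h1 := G2 s hs
      rw [h0, mul_zero] at h1
      have h2 : (1 : ℝ) + τt s ^ 2 ≠ 0 := by positivity
      have hc0 : c = 0 := by
        rcases mul_eq_zero.mp h1.symm with h | h
        · exact h
        · exact absurd h h2
      have h3 := G1 s hs
      rw [h0, mul_zero] at h3
      rw [h3, hc0, h0] at G4
      norm_num at G4
    rw [hddτ s hs, hdτ s hs, hsq s hs, hττ s hs]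
    have hX : (2 * τ2 s * (1 + τt s ^ 2) - 3 * τ1 s * (2 * τt s * τ1 s)) * ⟪B s, d⟫ = 0 := by
      linear_combination (2 * (1 + τt s ^ 2)) * G3 - (6 * τt s * τ1 s) * (G2 s hs)
    exact (mul_eq_zero.mp hX).resolve_right hBf0
  · -- backward direction
    intro hODE
    have hkey : ∀ s ∈ I, τ2 s * (1 + τt s ^ 2) = 3 * τt s * τ1 s ^ 2 := by
      intro s hs
      have h0 := hODE s hs
      rw [hddτ s hs, hdτ s hs, hsq s hs, hττ s hs] at h0
      linear_combination h0 / 2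
    rcases Set.eq_empty_or_nonempty I with hIe | ⟨s₀, hs₀⟩
    · refine ⟨EuclideanSpace.single 0 1, ?_, 0, ?_⟩
      · rw [EuclideanSpace.norm_single]; norm_num
      · intro s hs; rw [hIe] at hs; exact absurd hs (Set.notMem_empty s)
    · set w : ℝ → ℝ := fun s => Real.sqrt (1 + τt s ^ 2) with hwdef
      have hw0 : ∀ s, 0 < w s := fun s => Real.sqrt_pos.mpr (by positivity)
      have hw2 : ∀ s, w s ^ 2 = 1 + τt s ^ 2 := fun s => Real.sq_sqrt (by positivity)
      have HDw : ∀ s ∈ I, HasDerivAt w (τt s * τ1 s / w s) s := by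
        intro s hs
        have h1 := (((HDτt s hs).pow 2).const_add (1 : ℝ)).sqrt (by simp only [Pi.pow_apply]; positivity)
        simp only [Pi.pow_apply] at h1
        rw [show Real.sqrt (1 + τt s ^ 2) = w s from rfl,
          show (⟪B s, D4 s⟫ : ℝ) = τ1 s from rfl] at h1
        convert h1 using 1
        have hne := (hw0 s).ne'
        field_simp
        ring
      have HDh : ∀ s ∈ I, HasDerivAt (fun t => τ1 t / w t ^ 3) 0 s := by
        intro s hs
        have h1 := (HDτ1 s hs).div ((HDw s hs).pow 3) (pow_ne_zero 3 (hw0 s).ne')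
        refine HasDerivAt.congr_deriv h1 (Eq.symm ?_)
        have hne := (hw0 s).ne'
        symm
        rw [div_eq_zero_iff]
        left
        simp only [Pi.pow_apply]; norm_num only
        have hinv : w s * (w s)⁻¹ = 1 := mul_inv_cancel₀ hne
        linear_combination w s * hkey s hs + τ2 s * w s * hw2 s - 3 * w s * τt s * τ1 s ^ 2 * hinv
      have hm : ∀ s ∈ I, τ1 s / w s ^ 3 = τ1 s₀ / w s₀ ^ 3 :=
        fun s hs => const_on_open hIo hIc HDh hs hs₀
      set m := τ1 s₀ / w s₀ ^ 3 with hmdef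
      set df : ℝ → E3 := fun s => m • N s + (w s)⁻¹ • B s + (τt s / w s) • T s with hdfdef
      have HDdf : ∀ s ∈ I, HasDerivAt df 0 s := by
        intro s hs
        have h1 : HasDerivAt df
            ((m • D3 s) + ((w s)⁻¹ • (-(τt s) • N s) + (-(τt s * τ1 s / w s) / w s ^ 2) • B s)
              + ((τt s / w s) • N s
                + ((τ1 s * w s - τt s * (τt s * τ1 s / w s)) / w s ^ 2) • T s)) s := by
          apply HasDerivAt.add
          apply HasDerivAt.add
          · exact (HDN s hs).const_smul m
          · exact ((HDw s hs).inv (hw0 s).ne').smul (HDB s hs)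
          · exact ((HDτt s hs).div (HDw s hs) (hw0 s).ne').smul (HDT s hs)
        convert h1 using 1
        have hms : m = τ1 s / w s ^ 3 := (hm s hs).symm
        have hne := (hw0 s).ne'
        have hwsq := hw2 s
        rw [hD3dec s hs, hms]
        match_scalars
        · field_simp
          rw [show τt s ^ 2 = w s ^ 2 - 1 by linarith]; ring
        · field_simp; ring
        · field_simp
          ring
      have hdfc : ∀ s ∈ I, df s = df s₀ := fun s hs => const_on_open hIo hIc HDdf hs hs₀
      have hr0 : (0:ℝ) < Real.sqrt (m ^ 2 + 1) := Real.sqrt_pos.mpr (by positivity)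
      have hr2 : Real.sqrt (m ^ 2 + 1) ^ 2 = m ^ 2 + 1 := Real.sq_sqrt (by positivity)
      have hNB : ∀ s, ⟪N s, B s⟫ = 0 := fun s => by rw [real_inner_comm]; exact hBN s
      have hTB : ∀ s, ⟪T s, B s⟫ = 0 := fun s => by rw [real_inner_comm]; exact hBT s
      have hNT : ∀ s ∈ I, ⟪N s, T s⟫ = 0 := fun s hs => by
        rw [real_inner_comm]; exact hTN s hs
      have hdfN : ∀ s ∈ I, ⟪N s, df s⟫ = m := by
        intro s hs
        rw [hdfdef]
        simp only [inner_add_right, real_inner_smul_right]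
        rw [hN1 s hs, hNB s, hNT s hs]
        ring
      have hdfdf : ⟪df s₀, df s₀⟫ = m ^ 2 + 1 := by
        have hne := (hw0 s₀).ne'
        rw [hdfdef]
        simp only [inner_add_left, inner_add_right, real_inner_smul_left, real_inner_smul_right]
        rw [hN1 s₀ hs₀, hBB s₀ hs₀, hT1 s₀ hs₀, hNB s₀, hTB s₀, hNT s₀ hs₀,
          hBN s₀, hBT s₀, hTN s₀ hs₀]
        field_simp
        linear_combination (-1 : ℝ) * hw2 s₀
      refine ⟨(Real.sqrt (m ^ 2 + 1))⁻¹ • df s₀, ?_, m / Real.sqrt (m ^ 2 + 1), ?_⟩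
      · have h6 : ‖df s₀‖ = Real.sqrt (m ^ 2 + 1) := by
          have h7 : ‖df s₀‖ ^ 2 = m ^ 2 + 1 := by
            rw [← real_inner_self_eq_norm_sq]; exact hdfdf
          rw [← Real.sqrt_sq (norm_nonneg (df s₀)), h7]
        rw [norm_smul, h6, Real.norm_eq_abs, abs_of_pos (inv_pos.mpr hr0)]
        field_simp
      · intro s hs
        rw [← hdfc s hs, real_inner_smul_right, hdfN s hs]
        ring
end

section
/- Let α be a smooth unit-speed curve in E³ defined on an open interval I with constant curvature κ ≡ 1, and let τ(s) = det(α'(s), α''(s), α'''(s)) be its torsion. Then for all s ∈ I, det(α⁽³⁾(s), α⁽⁴⁾(s), α⁽⁵⁾(s)) = (1 + τ(s)²)·τ''(s) − 3·τ(s)·τ'(s)². -/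
open scoped RealInnerProductSpace

namespace Stmt2Helpers

/-- Plain dot product in coordinates. -/
def dot3 (u v : EuclideanSpace ℝ (Fin 3)) : ℝ :=
  u 0 * v 0 + u 1 * v 1 + u 2 * v 2

lemma dot3_def (u v : EuclideanSpace ℝ (Fin 3)) :
    dot3 u v = u 0 * v 0 + u 1 * v 1 + u 2 * v 2 := rfl

lemma det3_eq (u v w : EuclideanSpace ℝ (Fin 3)) :
    det3 u v w = u 0 * (v 1 * w 2 - v 2 * w 1) - u 1 * (v 0 * w 2 - v 2 * w 0)
      + u 2 * (v 0 * w 1 - v 1 * w 0) := by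
  simp [det3, Matrix.det_fin_three]; ring

lemma det3_self12 (u w : EuclideanSpace ℝ (Fin 3)) : det3 u u w = 0 := by
  rw [det3_eq]; ring

lemma det3_self23 (u v : EuclideanSpace ℝ (Fin 3)) : det3 u v v = 0 := by
  rw [det3_eq]; ring

lemma dot3_comm (u v : EuclideanSpace ℝ (Fin 3)) : dot3 u v = dot3 v u := by
  simp only [dot3_def]; ring

lemma _root_.HasDerivAt.coord {f : ℝ → EuclideanSpace ℝ (Fin 3)} {f' : EuclideanSpace ℝ (Fin 3)}
    {t : ℝ} (hf : HasDerivAt f f' t) (i : Fin 3) :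
    HasDerivAt (fun x => f x i) (f' i) t := by
  have := (EuclideanSpace.proj (𝕜 := ℝ) i).hasFDerivAt.comp_hasDerivAt t hf
  exact this

lemma hasDerivAt_dot3 {u v : ℝ → EuclideanSpace ℝ (Fin 3)}
    {u' v' : EuclideanSpace ℝ (Fin 3)} {t : ℝ}
    (hu : HasDerivAt u u' t) (hv : HasDerivAt v v' t) :
    HasDerivAt (fun x => dot3 (u x) (v x)) (dot3 u' (v t) + dot3 (u t) v') t := by
  have H := (((hu.coord 0).mul (hv.coord 0)).add ((hu.coord 1).mul (hv.coord 1))).add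
    ((hu.coord 2).mul (hv.coord 2))
  simp only [dot3_def]
  exact H.congr_deriv (by ring)

lemma hasDerivAt_det3 {u v w : ℝ → EuclideanSpace ℝ (Fin 3)}
    {u' v' w' : EuclideanSpace ℝ (Fin 3)} {t : ℝ}
    (hu : HasDerivAt u u' t) (hv : HasDerivAt v v' t) (hw : HasDerivAt w w' t) :
    HasDerivAt (fun x => det3 (u x) (v x) (w x))
      (det3 u' (v t) (w t) + det3 (u t) v' (w t) + det3 (u t) (v t) w') t := by
  have H0 := (hu.coord 0).mul (((hv.coord 1).mul (hw.coord 2)).sub ((hv.coord 2).mul (hw.coord 1)))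
  have H1 := (hu.coord 1).mul (((hv.coord 0).mul (hw.coord 2)).sub ((hv.coord 2).mul (hw.coord 0)))
  have H2 := (hu.coord 2).mul (((hv.coord 0).mul (hw.coord 1)).sub ((hv.coord 1).mul (hw.coord 0)))
  have H := (H0.sub H1).add H2
  simp only [det3_eq]
  exact H.congr_deriv (by simp only [Pi.mul_apply, Pi.sub_apply]; ring)

lemma key (a b c d e : EuclideanSpace ℝ (Fin 3)) (T U S : ℝ)
    (h1 : dot3 a a = 1) (h2 : dot3 b b = 1) (h3 : dot3 a b = 0)
    (h4 : dot3 a c = -1) (h5 : dot3 b c = 0) (h6 : dot3 a d = 0)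
    (h7 : dot3 c c + dot3 b d = 0) (h8 : dot3 b d + dot3 a e = 0)
    (h9 : 3 * dot3 c d + dot3 b e = 0)
    (hT : T = det3 a b c) (hU : U = det3 a b d)
    (hS : S = det3 a c d + det3 a b e) :
    det3 c d e = (1 + T ^ 2) * S - 3 * T * U ^ 2 := by
  simp only [dot3_def] at h1 h2 h3 h4 h5 h6 h7 h8 h9
  simp only [det3_eq] at hT hU hS ⊢
  have hBB : (a 1 * b 2 - a 2 * b 1)^2 + (a 2 * b 0 - a 0 * b 2)^2 + (a 0 * b 1 - a 1 * b 0)^2 = 1 := by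
    linear_combination (b 0 * b 0 + b 1 * b 1 + b 2 * b 2) * h1 + h2 - (a 0 * b 0 + a 1 * b 1 + a 2 * b 2) * h3
  have e10 : c 0 = -a 0 + T * (a 1 * b 2 - a 2 * b 1) := by
    linear_combination a 0 * h4 + b 0 * h5 - (a 1 * b 2 - a 2 * b 1) * hT + ((b 0 * c 0 + b 1 * c 1 + b 2 * c 2) * b 0 - (b 0 * b 0 + b 1 * b 1 + b 2 * b 2) * c 0) * h1 + ((a 0 * c 0 + a 1 * c 1 + a 2 * c 2) * a 0 - c 0) * h2 + ((a 0 * b 0 + a 1 * b 1 + a 2 * b 2) * c 0 - (a 0 * c 0 + a 1 * c 1 + a 2 * c 2) * b 0 - (b 0 * c 0 + b 1 * c 1 + b 2 * c 2) * a 0) * h3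
  have e11 : c 1 = -a 1 + T * (a 2 * b 0 - a 0 * b 2) := by
    linear_combination a 1 * h4 + b 1 * h5 - (a 2 * b 0 - a 0 * b 2) * hT + ((b 0 * c 0 + b 1 * c 1 + b 2 * c 2) * b 1 - (b 0 * b 0 + b 1 * b 1 + b 2 * b 2) * c 1) * h1 + ((a 0 * c 0 + a 1 * c 1 + a 2 * c 2) * a 1 - c 1) * h2 + ((a 0 * b 0 + a 1 * b 1 + a 2 * b 2) * c 1 - (a 0 * c 0 + a 1 * c 1 + a 2 * c 2) * b 1 - (b 0 * c 0 + b 1 * c 1 + b 2 * c 2) * a 1) * h3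
  have e12 : c 2 = -a 2 + T * (a 0 * b 1 - a 1 * b 0) := by
    linear_combination a 2 * h4 + b 2 * h5 - (a 0 * b 1 - a 1 * b 0) * hT + ((b 0 * c 0 + b 1 * c 1 + b 2 * c 2) * b 2 - (b 0 * b 0 + b 1 * b 1 + b 2 * b 2) * c 2) * h1 + ((a 0 * c 0 + a 1 * c 1 + a 2 * c 2) * a 2 - c 2) * h2 + ((a 0 * b 0 + a 1 * b 1 + a 2 * b 2) * c 2 - (a 0 * c 0 + a 1 * c 1 + a 2 * c 2) * b 2 - (b 0 * c 0 + b 1 * c 1 + b 2 * c 2) * a 2) * h3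
  have hcc : c 0 * c 0 + c 1 * c 1 + c 2 * c 2 = 1 + T ^ 2 := by
    rw [e10, e11, e12]; linear_combination h1 + T ^ 2 * hBB
  have hbd : b 0 * d 0 + b 1 * d 1 + b 2 * d 2 = -(1 + T ^ 2) := by
    linear_combination h7 - hcc
  have e20 : d 0 = -(1 + T ^ 2) * b 0 + U * (a 1 * b 2 - a 2 * b 1) := by
    linear_combination a 0 * h6 + b 0 * hbd - (a 1 * b 2 - a 2 * b 1) * hU + ((b 0 * d 0 + b 1 * d 1 + b 2 * d 2) * b 0 - (b 0 * b 0 + b 1 * b 1 + b 2 * b 2) * d 0) * h1 + ((a 0 * d 0 + a 1 * d 1 + a 2 * d 2) * a 0 - d 0) * h2 + ((a 0 * b 0 + a 1 * b 1 + a 2 * b 2) * d 0 - (a 0 * d 0 + a 1 * d 1 + a 2 * d 2) * b 0 - (b 0 * d 0 + b 1 * d 1 + b 2 * d 2) * a 0) * h3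
  have e21 : d 1 = -(1 + T ^ 2) * b 1 + U * (a 2 * b 0 - a 0 * b 2) := by
    linear_combination a 1 * h6 + b 1 * hbd - (a 2 * b 0 - a 0 * b 2) * hU + ((b 0 * d 0 + b 1 * d 1 + b 2 * d 2) * b 1 - (b 0 * b 0 + b 1 * b 1 + b 2 * b 2) * d 1) * h1 + ((a 0 * d 0 + a 1 * d 1 + a 2 * d 2) * a 1 - d 1) * h2 + ((a 0 * b 0 + a 1 * b 1 + a 2 * b 2) * d 1 - (a 0 * d 0 + a 1 * d 1 + a 2 * d 2) * b 1 - (b 0 * d 0 + b 1 * d 1 + b 2 * d 2) * a 1) * h3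
  have e22 : d 2 = -(1 + T ^ 2) * b 2 + U * (a 0 * b 1 - a 1 * b 0) := by
    linear_combination a 2 * h6 + b 2 * hbd - (a 0 * b 1 - a 1 * b 0) * hU + ((b 0 * d 0 + b 1 * d 1 + b 2 * d 2) * b 2 - (b 0 * b 0 + b 1 * b 1 + b 2 * b 2) * d 2) * h1 + ((a 0 * d 0 + a 1 * d 1 + a 2 * d 2) * a 2 - d 2) * h2 + ((a 0 * b 0 + a 1 * b 1 + a 2 * b 2) * d 2 - (a 0 * d 0 + a 1 * d 1 + a 2 * d 2) * b 2 - (b 0 * d 0 + b 1 * d 1 + b 2 * d 2) * a 2) * h3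
  have hcd : c 0 * d 0 + c 1 * d 1 + c 2 * d 2 = T * U := by
    rw [e10, e11, e12, e20, e21, e22]; linear_combination (1 + T ^ 2) * h3 + T * U * hBB
  have hbe : b 0 * e 0 + b 1 * e 1 + b 2 * e 2 = -(3 * T * U) := by
    linear_combination h9 - 3 * hcd
  have hae : a 0 * e 0 + a 1 * e 1 + a 2 * e 2 = 1 + T ^ 2 := by
    linear_combination h8 - hbd
  have hacd : a 0 * (c 1 * d 2 - c 2 * d 1) - a 1 * (c 0 * d 2 - c 2 * d 0) + a 2 * (c 0 * d 1 - c 1 * d 0) = T * (1 + T ^ 2) := by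
    rw [e10, e11, e12, e20, e21, e22]; linear_combination T * (1 + T ^ 2) * hBB
  have habe : a 0 * (b 1 * e 2 - b 2 * e 1) - a 1 * (b 0 * e 2 - b 2 * e 0) + a 2 * (b 0 * e 1 - b 1 * e 0) = S - T * (1 + T ^ 2) := by
    linear_combination -hS - hacd
  have e30 : e 0 = (1 + T ^ 2) * a 0 - 3 * T * U * b 0 + (S - T * (1 + T ^ 2)) * (a 1 * b 2 - a 2 * b 1) := by
    linear_combination a 0 * hae + b 0 * hbe + (a 1 * b 2 - a 2 * b 1) * habe + ((b 0 * e 0 + b 1 * e 1 + b 2 * e 2) * b 0 - (b 0 * b 0 + b 1 * b 1 + b 2 * b 2) * e 0) * h1 + ((a 0 * e 0 + a 1 * e 1 + a 2 * e 2) * a 0 - e 0) * h2 + ((a 0 * b 0 + a 1 * b 1 + a 2 * b 2) * e 0 - (a 0 * e 0 + a 1 * e 1 + a 2 * e 2) * b 0 - (b 0 * e 0 + b 1 * e 1 + b 2 * e 2) * a 0) * h3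
  have e31 : e 1 = (1 + T ^ 2) * a 1 - 3 * T * U * b 1 + (S - T * (1 + T ^ 2)) * (a 2 * b 0 - a 0 * b 2) := by
    linear_combination a 1 * hae + b 1 * hbe + (a 2 * b 0 - a 0 * b 2) * habe + ((b 0 * e 0 + b 1 * e 1 + b 2 * e 2) * b 1 - (b 0 * b 0 + b 1 * b 1 + b 2 * b 2) * e 1) * h1 + ((a 0 * e 0 + a 1 * e 1 + a 2 * e 2) * a 1 - e 1) * h2 + ((a 0 * b 0 + a 1 * b 1 + a 2 * b 2) * e 1 - (a 0 * e 0 + a 1 * e 1 + a 2 * e 2) * b 1 - (b 0 * e 0 + b 1 * e 1 + b 2 * e 2) * a 1) * h3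
  have e32 : e 2 = (1 + T ^ 2) * a 2 - 3 * T * U * b 2 + (S - T * (1 + T ^ 2)) * (a 0 * b 1 - a 1 * b 0) := by
    linear_combination a 2 * hae + b 2 * hbe + (a 0 * b 1 - a 1 * b 0) * habe + ((b 0 * e 0 + b 1 * e 1 + b 2 * e 2) * b 2 - (b 0 * b 0 + b 1 * b 1 + b 2 * b 2) * e 2) * h1 + ((a 0 * e 0 + a 1 * e 1 + a 2 * e 2) * a 2 - e 2) * h2 + ((a 0 * b 0 + a 1 * b 1 + a 2 * b 2) * e 2 - (a 0 * e 0 + a 1 * e 1 + a 2 * e 2) * b 2 - (b 0 * e 0 + b 1 * e 1 + b 2 * e 2) * a 2) * h3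
  rw [e10, e11, e12, e20, e21, e22, e30, e31, e32]
  linear_combination ((1 + T ^ 2) * S - 3 * T * U ^ 2) * hBB

end Stmt2Helpers

open Stmt2Helpers

/-- For a smooth unit-speed curve in `E³` with constant curvature `κ ≡ 1` and torsion
`τ = det(α', α'', α''')`, one has `det(α⁽³⁾, α⁽⁴⁾, α⁽⁵⁾) = (1 + τ²)·τ'' − 3·τ·τ'²` on `I`. -/
theorem stmt_2 (p q : ℝ) (α : ℝ → EuclideanSpace ℝ (Fin 3))
    (hα : ContDiffOn ℝ (⊤ : ℕ∞) α (Set.Ioo p q))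
    (hunit : ∀ s ∈ Set.Ioo p q, ‖deriv α s‖ = 1)
    (hκ : ∀ s ∈ Set.Ioo p q, ‖iteratedDeriv 2 α s‖ = 1)
    (τ : ℝ → ℝ)
    (hτ : ∀ s ∈ Set.Ioo p q,
      τ s = det3 (deriv α s) (iteratedDeriv 2 α s) (iteratedDeriv 3 α s)) :
    ∀ s ∈ Set.Ioo p q,
      det3 (iteratedDeriv 3 α s) (iteratedDeriv 4 α s) (iteratedDeriv 5 α s)
        = (1 + τ s ^ 2) * deriv (deriv τ) s - 3 * τ s * (deriv τ s) ^ 2 := by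
  simp only [← iteratedDeriv_one] at hunit hτ
  have hIo : IsOpen (Set.Ioo p q) := isOpen_Ioo
  -- all iterated derivatives are smooth on the interval
  have hCD : ∀ k : ℕ, ContDiffOn ℝ (⊤ : ℕ∞) (iteratedDeriv k α) (Set.Ioo p q) := by
    intro k; induction k with
    | zero => simpa [iteratedDeriv_zero] using hα
    | succ n ih =>
      rw [iteratedDeriv_succ]
      exact ih.deriv_of_isOpen hIo (by simp)
  have hD : ∀ (k : ℕ), ∀ t ∈ Set.Ioo p q,
      HasDerivAt (iteratedDeriv k α) (iteratedDeriv (k + 1) α t) t := by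
    intro k t ht
    have h1 : DifferentiableAt ℝ (iteratedDeriv k α) t :=
      ((hCD k).differentiableOn (by simp)).differentiableAt (hIo.mem_nhds ht)
    rw [iteratedDeriv_succ]
    exact h1.hasDerivAt
  -- derivative of pairwise dot products
  have dd : ∀ (j k : ℕ), ∀ t ∈ Set.Ioo p q,
      HasDerivAt (fun x => dot3 (iteratedDeriv j α x) (iteratedDeriv k α x))
        (dot3 (iteratedDeriv (j+1) α t) (iteratedDeriv k α t)
          + dot3 (iteratedDeriv j α t) (iteratedDeriv (k+1) α t)) t :=
    fun j k t ht => hasDerivAt_dot3 (hD j t ht) (hD k t ht)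
  -- a function constant on the interval has vanishing derivative there
  have const_deriv : ∀ (f g' : ℝ → ℝ) (C : ℝ),
      (∀ t ∈ Set.Ioo p q, HasDerivAt f (g' t) t) →
      (∀ t ∈ Set.Ioo p q, f t = C) →
      ∀ t ∈ Set.Ioo p q, g' t = 0 := by
    intro f g' C hf hfc t ht
    have h1 : f =ᶠ[nhds t] fun _ => C := by
      filter_upwards [hIo.mem_nhds ht] with x hx using hfc x hx
    have h2 : HasDerivAt (fun _ : ℝ => C) (g' t) t :=
      (hf t ht).congr_of_eventuallyEq h1.symm
    exact h2.unique (hasDerivAt_const t C)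
  -- norm hypotheses in dot form
  have hdot : ∀ (k : ℕ), (∀ s ∈ Set.Ioo p q, ‖iteratedDeriv k α s‖ = 1) →
      ∀ t ∈ Set.Ioo p q, dot3 (iteratedDeriv k α t) (iteratedDeriv k α t) = 1 := by
    intro k h t ht
    have h2 : ‖iteratedDeriv k α t‖ ^ 2 = 1 := by rw [h t ht]; norm_num
    rw [EuclideanSpace.norm_eq, Real.sq_sqrt (by positivity)] at h2
    have h3 : (iteratedDeriv k α t 0) ^ 2 + (iteratedDeriv k α t 1) ^ 2
        + (iteratedDeriv k α t 2) ^ 2 = 1 := by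
      simpa [Fin.sum_univ_three, Real.norm_eq_abs, sq_abs] using h2
    simp only [dot3_def]; linear_combination h3
  have u11 := hdot 1 hunit
  have u22 := hdot 2 hκ
  -- ⟪α', α''⟫ = 0
  have u12 : ∀ t ∈ Set.Ioo p q,
      dot3 (iteratedDeriv 1 α t) (iteratedDeriv 2 α t) = 0 := by
    intro t ht
    have := const_deriv _ _ 1 (dd 1 1) u11 t ht
    rw [dot3_comm (iteratedDeriv 2 α t)] at this
    linarith
  -- ⟪α'', α'''⟫ = 0
  have u23 : ∀ t ∈ Set.Ioo p q,
      dot3 (iteratedDeriv 2 α t) (iteratedDeriv 3 α t) = 0 := by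
    intro t ht
    have := const_deriv _ _ 1 (dd 2 2) u22 t ht
    rw [dot3_comm (iteratedDeriv 3 α t)] at this
    linarith
  -- ⟪α', α'''⟫ = -1
  have u13 : ∀ t ∈ Set.Ioo p q,
      dot3 (iteratedDeriv 1 α t) (iteratedDeriv 3 α t) = -1 := by
    intro t ht
    have := const_deriv _ _ 0 (dd 1 2) u12 t ht
    have h22 := u22 t ht
    linarith
  -- ⟪α', α⁗⟫ = 0
  have u14 : ∀ t ∈ Set.Ioo p q,
      dot3 (iteratedDeriv 1 α t) (iteratedDeriv 4 α t) = 0 := by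
    intro t ht
    have := const_deriv _ _ (-1) (dd 1 3) u13 t ht
    have h23 := u23 t ht
    linarith
  -- ⟪α''', α'''⟫ + ⟪α'', α⁗⟫ = 0
  have u3324 : ∀ t ∈ Set.Ioo p q,
      dot3 (iteratedDeriv 3 α t) (iteratedDeriv 3 α t)
        + dot3 (iteratedDeriv 2 α t) (iteratedDeriv 4 α t) = 0 := by
    intro t ht
    have := const_deriv _ _ 0 (dd 2 3) u23 t ht
    linarith
  intro s hs
  -- ⟪α'', α⁗⟫ + ⟪α', α⁽⁵⁾⟫ = 0 at s
  have u2415 : dot3 (iteratedDeriv 2 α s) (iteratedDeriv 4 α s)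
      + dot3 (iteratedDeriv 1 α s) (iteratedDeriv 5 α s) = 0 := by
    have := const_deriv _ _ 0 (dd 1 4) u14 s hs
    linarith
  -- 3⟪α''', α⁗⟫ + ⟪α'', α⁽⁵⁾⟫ = 0 at s
  have u925 : 3 * dot3 (iteratedDeriv 3 α s) (iteratedDeriv 4 α s)
      + dot3 (iteratedDeriv 2 α s) (iteratedDeriv 5 α s) = 0 := by
    have hder : ∀ t ∈ Set.Ioo p q,
        HasDerivAt (fun x => dot3 (iteratedDeriv 3 α x) (iteratedDeriv 3 α x)
            + dot3 (iteratedDeriv 2 α x) (iteratedDeriv 4 α x))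
          ((dot3 (iteratedDeriv 4 α t) (iteratedDeriv 3 α t)
              + dot3 (iteratedDeriv 3 α t) (iteratedDeriv 4 α t))
            + (dot3 (iteratedDeriv 3 α t) (iteratedDeriv 4 α t)
              + dot3 (iteratedDeriv 2 α t) (iteratedDeriv 5 α t))) t :=
      fun t ht => (dd 3 3 t ht).add (dd 2 4 t ht)
    have := const_deriv _ _ 0 hder u3324 s hs
    rw [dot3_comm (iteratedDeriv 4 α s)] at this
    linarith
  -- τ' = det(α', α'', α⁗) on the interval
  have hdτ : ∀ t ∈ Set.Ioo p q,
      deriv τ t = det3 (iteratedDeriv 1 α t) (iteratedDeriv 2 α t) (iteratedDeriv 4 α t) := by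
    intro t ht
    have hF := hasDerivAt_det3 (hD 1 t ht) (hD 2 t ht) (hD 3 t ht)
    rw [det3_self12, det3_self23] at hF
    have hτF : τ =ᶠ[nhds t] fun x =>
        det3 (iteratedDeriv 1 α x) (iteratedDeriv 2 α x) (iteratedDeriv 3 α x) := by
      filter_upwards [hIo.mem_nhds ht] with x hx using hτ x hx
    have hτ' : HasDerivAt τ
        (0 + 0 + det3 (iteratedDeriv 1 α t) (iteratedDeriv 2 α t) (iteratedDeriv 4 α t)) t :=
      hF.congr_of_eventuallyEq hτF
    rw [hτ'.deriv]; ring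
  -- τ'' at s
  have hddτ : deriv (deriv τ) s
      = det3 (iteratedDeriv 1 α s) (iteratedDeriv 3 α s) (iteratedDeriv 4 α s)
        + det3 (iteratedDeriv 1 α s) (iteratedDeriv 2 α s) (iteratedDeriv 5 α s) := by
    have hG := hasDerivAt_det3 (hD 1 s hs) (hD 2 s hs) (hD 4 s hs)
    rw [det3_self12] at hG
    have hτG : deriv τ =ᶠ[nhds s] fun x =>
        det3 (iteratedDeriv 1 α x) (iteratedDeriv 2 α x) (iteratedDeriv 4 α x) := by
      filter_upwards [hIo.mem_nhds hs] with x hx using hdτ x hx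
    have hτ'' : HasDerivAt (deriv τ)
        (0 + det3 (iteratedDeriv 1 α s) (iteratedDeriv 3 α s) (iteratedDeriv 4 α s)
          + det3 (iteratedDeriv 1 α s) (iteratedDeriv 2 α s) (iteratedDeriv 5 α s)) s :=
      hG.congr_of_eventuallyEq hτG
    rw [hτ''.deriv]; ring
  exact key (iteratedDeriv 1 α s) (iteratedDeriv 2 α s) (iteratedDeriv 3 α s)
    (iteratedDeriv 4 α s) (iteratedDeriv 5 α s) (τ s) (deriv τ s) (deriv (deriv τ) s)
    (u11 s hs) (u22 s hs) (u12 s hs) (u13 s hs) (u23 s hs) (u14 s hs)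
    (u3324 s hs) u2415 u925 (hτ s hs) (hdτ s hs) hddτ
end

section
/- Let b ≠ 0 and c be real constants, let ε ∈ {+1, −1}, and let J ⊆ ℝ be an open interval on which (b·s + c)² < 1. Then the function τ(s) = ε·(b·s + c)/√(1 − (b·s + c)²) is twice differentiable on J and satisfies the differential equation 2·τ''(s)·(1 + τ(s)²) − 3·τ'(s)·(1 + τ(s)²)' = 0 for all s ∈ J, where (1 + τ²)' denotes the derivative of s ↦ 1 + τ(s)². -/
/-!
`τ` is the slope of an arc of a circle of radius `1 / |b|`: writing `u = b s + c`, one has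
`1 + τ² = 1 / (1 - u²)` and hence `τ' = ε b (1 + τ²)^{3/2}`, i.e. the graph of a primitive of `τ`
has constant curvature `ε b`. Any solution of `f' = k (1 + f²)^{3/2}` satisfies the equation,
because differentiating once more gives `f'' = (3/2) k (1 + f²)^{1/2} (1 + f²)'`, that is
`2 f'' (1 + f²) = 3 f' (1 + f²)'`.
-/

open Filter Topology

lemma one_add_sq_div_sqrt_one_sub_sq {x : ℝ} (hx : x ^ 2 < 1) :
    1 + (x / √(1 - x ^ 2)) ^ 2 = (1 - x ^ 2)⁻¹ := by
  have hpos : 0 < 1 - x ^ 2 := by linarith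
  rw [div_pow, Real.sq_sqrt hpos.le]
  field_simp
  ring

lemma hasDerivAt_div_sqrt_one_sub_sq {x : ℝ} (hx : x ^ 2 < 1) :
    HasDerivAt (fun y => y / √(1 - y ^ 2)) (√(1 + (x / √(1 - x ^ 2)) ^ 2) ^ 3) x := by
  have hpos : 0 < 1 - x ^ 2 := by linarith
  have hsqrt : 0 < √(1 - x ^ 2) := Real.sqrt_pos.mpr hpos
  have hsq : √(1 - x ^ 2) ^ 2 = 1 - x ^ 2 := Real.sq_sqrt hpos.le
  have hden : HasDerivAt (fun y => √(1 - y ^ 2)) (-(2 * x) / (2 * √(1 - x ^ 2))) x := by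
    simpa using ((hasDerivAt_pow 2 x).const_sub 1).sqrt hpos.ne'
  refine ((hasDerivAt_id x).div hden hsqrt.ne').congr_deriv ?_
  rw [one_add_sq_div_sqrt_one_sub_sq hx, Real.sqrt_inv, id_eq]
  set r := √(1 - x ^ 2)
  field_simp
  linear_combination hsq

lemma hasDerivAt_mul_affine_div_sqrt {b c ε s : ℝ} (hε : ε ^ 2 = 1) (hs : (b * s + c) ^ 2 < 1) :
    HasDerivAt (fun s => ε * (b * s + c) / √(1 - (b * s + c) ^ 2))
      (ε * b * √(1 + (ε * (b * s + c) / √(1 - (b * s + c) ^ 2)) ^ 2) ^ 3) s := by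
  have haffine : HasDerivAt (fun s => b * s + c) b s := by
    simpa using ((hasDerivAt_id s).const_mul b).add_const c
  have h := ((hasDerivAt_div_sqrt_one_sub_sq hs).comp s haffine).const_mul ε
  simp only [Function.comp_def, ← mul_div_assoc] at h
  refine h.congr_deriv ?_
  rw [mul_div_assoc, mul_pow, hε, one_mul]
  ring

section ConstantCurvature

variable {f : ℝ → ℝ} {k s : ℝ}

lemma hasDerivAt_deriv_of_const_curvature
    (hf : ∀ᶠ t in 𝓝 s, HasDerivAt f (k * √(1 + f t ^ 2) ^ 3) t) :
    HasDerivAt (deriv f) (3 * k ^ 2 * f s * (1 + f s ^ 2) ^ 2) s := by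
  have hg : 0 < 1 + f s ^ 2 := by positivity
  have hsq : √(1 + f s ^ 2) ^ 2 = 1 + f s ^ 2 := Real.sq_sqrt hg.le
  have hderiv : deriv f =ᶠ[𝓝 s] fun t => k * √(1 + f t ^ 2) ^ 3 := hf.mono fun t ht => ht.deriv
  have h1 : HasDerivAt (fun t => 1 + f t ^ 2) (2 * f s * (k * √(1 + f s ^ 2) ^ 3)) s := by
    simpa using (hf.self_of_nhds.pow 2).const_add 1
  refine ((((h1.sqrt hg.ne').pow 3).const_mul k).congr_of_eventuallyEq hderiv).congr_deriv ?_
  set r := √(1 + f s ^ 2)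
  rw [← hsq]
  field_simp
  ring

lemma two_mul_deriv_deriv_mul_one_add_sq_of_const_curvature
    (hf : ∀ᶠ t in 𝓝 s, HasDerivAt f (k * √(1 + f t ^ 2) ^ 3) t) :
    2 * deriv (deriv f) s * (1 + f s ^ 2) = 3 * deriv f s * deriv (fun u => 1 + f u ^ 2) s := by
  have hsq : √(1 + f s ^ 2) ^ 2 = 1 + f s ^ 2 := Real.sq_sqrt (by positivity)
  rw [(hasDerivAt_deriv_of_const_curvature hf).deriv,
    HasDerivAt.deriv (f := fun u => 1 + f u ^ 2) ((hf.self_of_nhds.pow 2).const_add 1),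
    hf.self_of_nhds.deriv]
  set r := √(1 + f s ^ 2)
  rw [← hsq]
  ring

end ConstantCurvature

theorem stmt_4_general (b c ε : ℝ) (hε : ε = 1 ∨ ε = -1) (p q : ℝ)
    (hJ : ∀ s ∈ Set.Ioo p q, (b * s + c) ^ 2 < 1)
    (τ : ℝ → ℝ)
    (hτ : ∀ s, τ s = ε * (b * s + c) / Real.sqrt (1 - (b * s + c) ^ 2)) :
    (∀ s ∈ Set.Ioo p q, DifferentiableAt ℝ τ s ∧ DifferentiableAt ℝ (deriv τ) s) ∧
      (∀ s ∈ Set.Ioo p q,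
        2 * deriv (deriv τ) s * (1 + τ s ^ 2)
          - 3 * deriv τ s * deriv (fun u => 1 + τ u ^ 2) s = 0) := by
  have hε2 : ε ^ 2 = 1 := by rcases hε with rfl | rfl <;> norm_num
  have hτ' : ∀ s ∈ Set.Ioo p q, ∀ᶠ t in 𝓝 s, HasDerivAt τ (ε * b * √(1 + τ t ^ 2) ^ 3) t := by
    intro s hs
    filter_upwards [isOpen_Ioo.mem_nhds hs] with t ht
    rw [funext hτ]
    exact hasDerivAt_mul_affine_div_sqrt hε2 (hJ t ht)
  exact ⟨fun s hs => ⟨(hτ' s hs).self_of_nhds.differentiableAt,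
      (hasDerivAt_deriv_of_const_curvature (hτ' s hs)).differentiableAt⟩,
    fun s hs => sub_eq_zero.mpr (two_mul_deriv_deriv_mul_one_add_sq_of_const_curvature (hτ' s hs))⟩

/-- The function `τ(s) = ε·(b·s + c)/√(1 − (b·s + c)²)` (with `b ≠ 0`, `ε = ±1`) is twice
differentiable on an open interval `J` where `(b·s + c)² < 1`, and satisfies the differential
equation `2·τ''·(1 + τ²) − 3·τ'·(1 + τ²)' = 0` there. -/
theorem stmt_4 (b c ε : ℝ) (hb : b ≠ 0) (hε : ε = 1 ∨ ε = -1) (p q : ℝ)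
    (hJ : ∀ s ∈ Set.Ioo p q, (b * s + c) ^ 2 < 1)
    (τ : ℝ → ℝ)
    (hτ : ∀ s, τ s = ε * (b * s + c) / Real.sqrt (1 - (b * s + c) ^ 2)) :
    (∀ s ∈ Set.Ioo p q, DifferentiableAt ℝ τ s ∧ DifferentiableAt ℝ (deriv τ) s) ∧
      (∀ s ∈ Set.Ioo p q,
        2 * deriv (deriv τ) s * (1 + τ s ^ 2)
          - 3 * deriv τ s * deriv (fun u => 1 + τ u ^ 2) s = 0) :=
  stmt_4_general b c ε hε p q hJ τ hτ
end

section
/- Let α be a smooth unit-speed curve in E³ defined on an open interval I lying on the unit sphere centered at the origin (‖α(s)‖ = 1 for all s ∈ I). Then det(α(s), α'(s), α''(s)) = 0 for all s ∈ I if and only if α is a great circle, i.e. there exists a unit vector d ∈ E³ such that ⟪α(s), d⟫ = 0 for all s ∈ I. -/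
open scoped RealInnerProductSpace

/-- Derivative of a function constant on an open interval is zero. -/
lemma aux_deriv_zero_on_Ioo {f : ℝ → ℝ} {v c p q s : ℝ} (hs : s ∈ Set.Ioo p q)
    (hf : HasDerivAt f v s) (h : ∀ t ∈ Set.Ioo p q, f t = c) : v = 0 := by
  have hev : f =ᶠ[nhds s] fun _ => c :=
    Filter.eventually_of_mem (isOpen_Ioo.mem_nhds hs) h
  have h2 : HasDerivAt (fun _ : ℝ => c) v s := hf.congr_of_eventuallyEq hev.symm
  exact h2.unique (hasDerivAt_const s c)

/-- A function with zero derivative on an open interval is constant there. -/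
lemma aux_const_on_Ioo {f : ℝ → ℝ} {p q x y : ℝ}
    (hd : ∀ s ∈ Set.Ioo p q, HasDerivAt f 0 s)
    (hx : x ∈ Set.Ioo p q) (hy : y ∈ Set.Ioo p q) : f x = f y := by
  have hdiff : DifferentiableOn ℝ f (Set.Ioo p q) :=
    fun s hs => ((hd s hs).differentiableAt).differentiableWithinAt
  refine (convex_Ioo p q).is_const_of_fderivWithin_eq_zero hdiff (fun z hz => ?_) hx hy
  have := ((hd z hz).hasFDerivAt).hasFDerivWithinAt.fderivWithin
    (isOpen_Ioo.uniqueDiffWithinAt hz)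
  rw [this]
  ext
  simp

/-- Component derivative of a curve in `E³`. -/
lemma aux_comp_hasDerivAt {α : ℝ → EuclideanSpace ℝ (Fin 3)}
    {v : EuclideanSpace ℝ (Fin 3)} {s : ℝ}
    (h : HasDerivAt α v s) (i : Fin 3) :
    HasDerivAt (fun t => α t i) (v i) s :=
  (EuclideanSpace.proj i (𝕜 := ℝ)).hasFDerivAt.comp_hasDerivAt s h

/-- The key linear algebra fact: if `a`, `b` are orthonormal, `b·c = 0`, `a·c = -1` and
`det(a,b,c) = 0`, then `c = -a`. -/
lemma aux_alg_key (a0 a1 a2 b0 b1 b2 c0 c1 c2 : ℝ)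
    (hA : a0^2+a1^2+a2^2 = 1) (hB : b0^2+b1^2+b2^2 = 1)
    (hP : a0*b0+a1*b1+a2*b2 = 0)
    (hBC : b0*c0+b1*c1+b2*c2 = 0)
    (hAC : a0*c0+a1*c1+a2*c2 = -1)
    (hdet : a0*(b1*c2-b2*c1) - a1*(b0*c2-b2*c0) + a2*(b0*c1-b1*c0) = 0) :
    c0 = -a0 ∧ c1 = -a1 ∧ c2 = -a2 := by
  have hcv : c0*(a1*b2-a2*b1) + c1*(a2*b0-a0*b2) + c2*(a0*b1-a1*b0) = 0 := by
    linear_combination hdet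
  have hV : (a1*b2-a2*b1)^2 + (a2*b0-a0*b2)^2 + (a0*b1-a1*b0)^2 = 1 := by
    linear_combination (b0^2+b1^2+b2^2) * hA + hB - (a0*b0+a1*b1+a2*b2) * hP
  have hw0 : (a2*b0-a0*b2)*c2 - (a0*b1-a1*b0)*c1 = -b0 := by
    linear_combination b0 * hAC - a0 * hBC
  have hw1 : (a0*b1-a1*b0)*c0 - (a1*b2-a2*b1)*c2 = -b1 := by
    linear_combination b1 * hAC - a1 * hBC
  have hw2 : (a1*b2-a2*b1)*c1 - (a2*b0-a0*b2)*c0 = -b2 := by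
    linear_combination b2 * hAC - a2 * hBC
  refine ⟨?_, ?_, ?_⟩
  · linear_combination (-c0) * hV + (a1*b2-a2*b1) * hcv + (a0*b1-a1*b0) * hw1
      - (a2*b0-a0*b2) * hw2 - a0*hB + b0*hP
  · linear_combination (-c1) * hV + (a2*b0-a0*b2) * hcv + (a1*b2-a2*b1) * hw2
      - (a0*b1-a1*b0) * hw0 - a1*hB + b1*hP
  · linear_combination (-c2) * hV + (a0*b1-a1*b0) * hcv + (a2*b0-a0*b2) * hw0
      - (a1*b2-a2*b1) * hw1 - a2*hB + b2*hP

/-- For a smooth unit-speed curve on the unit sphere of `E³`, `det(α, α', α'') = 0` on `I`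
iff `α` is a great circle, i.e. `⟪α(s), d⟫ = 0` on `I` for some unit vector `d`. -/
theorem stmt_9 (p q : ℝ) (α : ℝ → EuclideanSpace ℝ (Fin 3))
    (hα : ContDiffOn ℝ (⊤ : ℕ∞) α (Set.Ioo p q))
    (hunit : ∀ s ∈ Set.Ioo p q, ‖deriv α s‖ = 1)
    (hsph : ∀ s ∈ Set.Ioo p q, ‖α s‖ = 1) :
    (∀ s ∈ Set.Ioo p q, det3 (α s) (deriv α s) (iteratedDeriv 2 α s) = 0) ↔
      (∃ d : EuclideanSpace ℝ (Fin 3), ‖d‖ = 1 ∧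
        ∀ s ∈ Set.Ioo p q, ⟪α s, d⟫ = 0) := by
  have h2eq : iteratedDeriv 2 α = deriv (deriv α) := by
    rw [show (2:ℕ) = 1+1 from rfl, iteratedDeriv_succ, iteratedDeriv_one]
  have hop : IsOpen (Set.Ioo p q) := isOpen_Ioo
  have hdiff1 : DifferentiableOn ℝ α (Set.Ioo p q) := hα.differentiableOn (by norm_num)
  have hdiff2 : DifferentiableOn ℝ (deriv α) (Set.Ioo p q) :=
    (hα.deriv_of_isOpen hop (m := 1) (by exact WithTop.coe_le_coe.mpr (le_top : (1 + 1 : ℕ∞) ≤ ⊤))).differentiableOn one_ne_zero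
  have hd1 : ∀ s ∈ Set.Ioo p q, HasDerivAt α (deriv α s) s := fun s hs =>
    (hdiff1.differentiableAt (hop.mem_nhds hs)).hasDerivAt
  have hd2 : ∀ s ∈ Set.Ioo p q, HasDerivAt (deriv α) (deriv (deriv α) s) s := fun s hs =>
    (hdiff2.differentiableAt (hop.mem_nhds hs)).hasDerivAt
  have hA : ∀ s ∈ Set.Ioo p q, (α s 0)^2 + (α s 1)^2 + (α s 2)^2 = 1 := by
    intro s hs
    have h := hsph s hs
    rw [EuclideanSpace.norm_eq] at h
    simpa [Fin.sum_univ_three, sq_abs] using Real.sqrt_eq_one.mp h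
  have hB : ∀ s ∈ Set.Ioo p q,
      (deriv α s 0)^2 + (deriv α s 1)^2 + (deriv α s 2)^2 = 1 := by
    intro s hs
    have h := hunit s hs
    rw [EuclideanSpace.norm_eq] at h
    simpa [Fin.sum_univ_three, sq_abs] using Real.sqrt_eq_one.mp h
  have hP : ∀ s ∈ Set.Ioo p q,
      α s 0 * deriv α s 0 + α s 1 * deriv α s 1 + α s 2 * deriv α s 2 = 0 := by
    intro s hs
    have H : HasDerivAt (fun t => α t 0 * α t 0 + α t 1 * α t 1 + α t 2 * α t 2)
        ((deriv α s 0 * α s 0 + α s 0 * deriv α s 0)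
          + (deriv α s 1 * α s 1 + α s 1 * deriv α s 1)
          + (deriv α s 2 * α s 2 + α s 2 * deriv α s 2)) s :=
      (((aux_comp_hasDerivAt (hd1 s hs) 0).mul (aux_comp_hasDerivAt (hd1 s hs) 0)).add
        ((aux_comp_hasDerivAt (hd1 s hs) 1).mul (aux_comp_hasDerivAt (hd1 s hs) 1))).add
        ((aux_comp_hasDerivAt (hd1 s hs) 2).mul (aux_comp_hasDerivAt (hd1 s hs) 2))
    have hz := aux_deriv_zero_on_Ioo (c := 1) hs H (fun t ht => by linear_combination hA t ht)
    linear_combination hz / 2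
  have hBC : ∀ s ∈ Set.Ioo p q,
      deriv α s 0 * deriv (deriv α) s 0 + deriv α s 1 * deriv (deriv α) s 1
        + deriv α s 2 * deriv (deriv α) s 2 = 0 := by
    intro s hs
    have H : HasDerivAt
        (fun t => deriv α t 0 * deriv α t 0 + deriv α t 1 * deriv α t 1
          + deriv α t 2 * deriv α t 2)
        ((deriv (deriv α) s 0 * deriv α s 0 + deriv α s 0 * deriv (deriv α) s 0)
          + (deriv (deriv α) s 1 * deriv α s 1 + deriv α s 1 * deriv (deriv α) s 1)
          + (deriv (deriv α) s 2 * deriv α s 2 + deriv α s 2 * deriv (deriv α) s 2)) s :=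
      (((aux_comp_hasDerivAt (hd2 s hs) 0).mul (aux_comp_hasDerivAt (hd2 s hs) 0)).add
        ((aux_comp_hasDerivAt (hd2 s hs) 1).mul (aux_comp_hasDerivAt (hd2 s hs) 1))).add
        ((aux_comp_hasDerivAt (hd2 s hs) 2).mul (aux_comp_hasDerivAt (hd2 s hs) 2))
    have hz := aux_deriv_zero_on_Ioo (c := 1) hs H (fun t ht => by linear_combination hB t ht)
    linear_combination hz / 2
  have hAC : ∀ s ∈ Set.Ioo p q,
      α s 0 * deriv (deriv α) s 0 + α s 1 * deriv (deriv α) s 1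
        + α s 2 * deriv (deriv α) s 2 = -1 := by
    intro s hs
    have H : HasDerivAt
        (fun t => α t 0 * deriv α t 0 + α t 1 * deriv α t 1 + α t 2 * deriv α t 2)
        ((deriv α s 0 * deriv α s 0 + α s 0 * deriv (deriv α) s 0)
          + (deriv α s 1 * deriv α s 1 + α s 1 * deriv (deriv α) s 1)
          + (deriv α s 2 * deriv α s 2 + α s 2 * deriv (deriv α) s 2)) s :=
      (((aux_comp_hasDerivAt (hd1 s hs) 0).mul (aux_comp_hasDerivAt (hd2 s hs) 0)).add
        ((aux_comp_hasDerivAt (hd1 s hs) 1).mul (aux_comp_hasDerivAt (hd2 s hs) 1))).add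
        ((aux_comp_hasDerivAt (hd1 s hs) 2).mul (aux_comp_hasDerivAt (hd2 s hs) 2))
    have hz := aux_deriv_zero_on_Ioo (c := 0) hs H (fun t ht => hP t ht)
    linear_combination hz - hB s hs
  constructor
  · -- forward direction
    intro hdet0
    by_cases hpq : p < q
    · have key : ∀ s ∈ Set.Ioo p q,
          deriv (deriv α) s 0 = -(α s 0) ∧ deriv (deriv α) s 1 = -(α s 1)
            ∧ deriv (deriv α) s 2 = -(α s 2) := by
        intro s hs
        have hdet' : α s 0 * (deriv α s 1 * deriv (deriv α) s 2
              - deriv α s 2 * deriv (deriv α) s 1)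
            - α s 1 * (deriv α s 0 * deriv (deriv α) s 2
              - deriv α s 2 * deriv (deriv α) s 0)
            + α s 2 * (deriv α s 0 * deriv (deriv α) s 1
              - deriv α s 1 * deriv (deriv α) s 0) = 0 := by
          have h := hdet0 s hs
          rw [h2eq] at h
          simp [det3, Matrix.det_fin_three] at h
          linear_combination h
        exact aux_alg_key _ _ _ _ _ _ _ _ _ (hA s hs) (hB s hs) (hP s hs)
          (hBC s hs) (hAC s hs) hdet'
      -- the cross product α × α' has zero derivative componentwise
      have Hg0 : ∀ s ∈ Set.Ioo p q,
          HasDerivAt (fun t => α t 1 * deriv α t 2 - α t 2 * deriv α t 1) 0 s := by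
        intro s hs
        have H := ((aux_comp_hasDerivAt (hd1 s hs) 1).mul
            (aux_comp_hasDerivAt (hd2 s hs) 2)).sub
          ((aux_comp_hasDerivAt (hd1 s hs) 2).mul (aux_comp_hasDerivAt (hd2 s hs) 1))
        have hv : (deriv α s 1 * deriv α s 2 + α s 1 * deriv (deriv α) s 2)
            - (deriv α s 2 * deriv α s 1 + α s 2 * deriv (deriv α) s 1) = 0 := by
          obtain ⟨k0, k1, k2⟩ := key s hs
          rw [k1, k2]; ring
        rwa [hv] at H
      have Hg1 : ∀ s ∈ Set.Ioo p q,
          HasDerivAt (fun t => α t 2 * deriv α t 0 - α t 0 * deriv α t 2) 0 s := by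
        intro s hs
        have H := ((aux_comp_hasDerivAt (hd1 s hs) 2).mul
            (aux_comp_hasDerivAt (hd2 s hs) 0)).sub
          ((aux_comp_hasDerivAt (hd1 s hs) 0).mul (aux_comp_hasDerivAt (hd2 s hs) 2))
        have hv : (deriv α s 2 * deriv α s 0 + α s 2 * deriv (deriv α) s 0)
            - (deriv α s 0 * deriv α s 2 + α s 0 * deriv (deriv α) s 2) = 0 := by
          obtain ⟨k0, k1, k2⟩ := key s hs
          rw [k0, k2]; ring
        rwa [hv] at H
      have Hg2 : ∀ s ∈ Set.Ioo p q,
          HasDerivAt (fun t => α t 0 * deriv α t 1 - α t 1 * deriv α t 0) 0 s := by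
        intro s hs
        have H := ((aux_comp_hasDerivAt (hd1 s hs) 0).mul
            (aux_comp_hasDerivAt (hd2 s hs) 1)).sub
          ((aux_comp_hasDerivAt (hd1 s hs) 1).mul (aux_comp_hasDerivAt (hd2 s hs) 0))
        have hv : (deriv α s 0 * deriv α s 1 + α s 0 * deriv (deriv α) s 1)
            - (deriv α s 1 * deriv α s 0 + α s 1 * deriv (deriv α) s 0) = 0 := by
          obtain ⟨k0, k1, k2⟩ := key s hs
          rw [k0, k1]; ring
        rwa [hv] at H
      set s₀ : ℝ := p + (q - p) / 2 with hs₀def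
      have hs₀ : s₀ ∈ Set.Ioo p q := by constructor <;> [skip; skip] <;> simp [hs₀def] <;> linarith
      refine ⟨(WithLp.equiv 2 (Fin 3 → ℝ)).symm
        ![α s₀ 1 * deriv α s₀ 2 - α s₀ 2 * deriv α s₀ 1,
          α s₀ 2 * deriv α s₀ 0 - α s₀ 0 * deriv α s₀ 2,
          α s₀ 0 * deriv α s₀ 1 - α s₀ 1 * deriv α s₀ 0], ?_, ?_⟩
      · rw [EuclideanSpace.norm_eq]
        rw [Real.sqrt_eq_one]
        simp only [Fin.sum_univ_three]
        show ‖α s₀ 1 * deriv α s₀ 2 - α s₀ 2 * deriv α s₀ 1‖ ^ 2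
            + ‖α s₀ 2 * deriv α s₀ 0 - α s₀ 0 * deriv α s₀ 2‖ ^ 2
            + ‖α s₀ 0 * deriv α s₀ 1 - α s₀ 1 * deriv α s₀ 0‖ ^ 2 = 1
        rw [Real.norm_eq_abs, Real.norm_eq_abs, Real.norm_eq_abs, sq_abs, sq_abs, sq_abs]
        linear_combination ((deriv α s₀ 0)^2 + (deriv α s₀ 1)^2 + (deriv α s₀ 2)^2) * hA s₀ hs₀
          + hB s₀ hs₀
          - (α s₀ 0 * deriv α s₀ 0 + α s₀ 1 * deriv α s₀ 1 + α s₀ 2 * deriv α s₀ 2) * hP s₀ hs₀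
      · intro s hs
        have e0 : α s₀ 1 * deriv α s₀ 2 - α s₀ 2 * deriv α s₀ 1
            = α s 1 * deriv α s 2 - α s 2 * deriv α s 1 := aux_const_on_Ioo Hg0 hs₀ hs
        have e1 : α s₀ 2 * deriv α s₀ 0 - α s₀ 0 * deriv α s₀ 2
            = α s 2 * deriv α s 0 - α s 0 * deriv α s 2 := aux_const_on_Ioo Hg1 hs₀ hs
        have e2 : α s₀ 0 * deriv α s₀ 1 - α s₀ 1 * deriv α s₀ 0
            = α s 0 * deriv α s 1 - α s 1 * deriv α s 0 := aux_const_on_Ioo Hg2 hs₀ hs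
        simp only [PiLp.inner_apply, RCLike.inner_apply, conj_trivial, Fin.sum_univ_three]
        show (α s₀ 1 * deriv α s₀ 2 - α s₀ 2 * deriv α s₀ 1) * α s 0
          + (α s₀ 2 * deriv α s₀ 0 - α s₀ 0 * deriv α s₀ 2) * α s 1
          + (α s₀ 0 * deriv α s₀ 1 - α s₀ 1 * deriv α s₀ 0) * α s 2 = 0
        rw [e0, e1, e2]; ring
    · -- empty interval
      have hIoo : Set.Ioo p q = ∅ := Set.Ioo_eq_empty hpq
      refine ⟨EuclideanSpace.single 0 1, by simp, ?_⟩
      intro s hs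
      rw [hIoo] at hs
      exact absurd hs (Set.notMem_empty s)
  · -- reverse direction
    rintro ⟨d, hdnorm, horth⟩ s hs
    have ho : ∀ t ∈ Set.Ioo p q,
        α t 0 * d 0 + α t 1 * d 1 + α t 2 * d 2 = 0 := by
      intro t ht
      have h := horth t ht
      simp [PiLp.inner_apply, RCLike.inner_apply, Fin.sum_univ_three] at h
      linear_combination h
    have hob : ∀ t ∈ Set.Ioo p q,
        deriv α t 0 * d 0 + deriv α t 1 * d 1 + deriv α t 2 * d 2 = 0 := by
      intro t ht
      have H : HasDerivAt (fun u => α u 0 * d 0 + α u 1 * d 1 + α u 2 * d 2)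
          (deriv α t 0 * d 0 + deriv α t 1 * d 1 + deriv α t 2 * d 2) t :=
        (((aux_comp_hasDerivAt (hd1 t ht) 0).mul_const (d 0)).add
          ((aux_comp_hasDerivAt (hd1 t ht) 1).mul_const (d 1))).add
          ((aux_comp_hasDerivAt (hd1 t ht) 2).mul_const (d 2))
      exact aux_deriv_zero_on_Ioo ht H ho
    have hoc : ∀ t ∈ Set.Ioo p q,
        deriv (deriv α) t 0 * d 0 + deriv (deriv α) t 1 * d 1
          + deriv (deriv α) t 2 * d 2 = 0 := by
      intro t ht
      have H : HasDerivAt (fun u => deriv α u 0 * d 0 + deriv α u 1 * d 1 + deriv α u 2 * d 2)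
          (deriv (deriv α) t 0 * d 0 + deriv (deriv α) t 1 * d 1
            + deriv (deriv α) t 2 * d 2) t :=
        (((aux_comp_hasDerivAt (hd2 t ht) 0).mul_const (d 0)).add
          ((aux_comp_hasDerivAt (hd2 t ht) 1).mul_const (d 1))).add
          ((aux_comp_hasDerivAt (hd2 t ht) 2).mul_const (d 2))
      exact aux_deriv_zero_on_Ioo ht H hob
    rw [h2eq, det3]
    refine Matrix.exists_mulVec_eq_zero_iff.mp ⟨![d 0, d 1, d 2], ?_, ?_⟩
    · intro h
      have hz : d = 0 := by
        ext i
        fin_cases i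
        · exact congrFun h 0
        · exact congrFun h 1
        · exact congrFun h 2
      rw [hz] at hdnorm
      simp at hdnorm
    · funext i
      fin_cases i
      · simpa [Matrix.mulVec, dotProduct, Fin.sum_univ_three] using ho s hs
      · simpa [Matrix.mulVec, dotProduct, Fin.sum_univ_three] using hob s hs
      · simpa [Matrix.mulVec, dotProduct, Fin.sum_univ_three] using hoc s hs
end

section
/- Let α be a smooth unit-speed curve in E³ defined on an open interval I with nowhere-vanishing curvature (‖α''(s)‖ > 0 for all s ∈ I). Then det(α'(s), α''(s), α'''(s)) = 0 for all s ∈ I if and only if α is a plane curve, i.e. there exist a unit vector d ∈ E³ and a constant c such that ⟪α(s), d⟫ = c for all s ∈ I. -/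
open scoped RealInnerProductSpace
open Matrix

local notation "E3" => EuclideanSpace ℝ (Fin 3)

noncomputable def crossE (u v : E3) : E3 :=
  (WithLp.equiv 2 (Fin 3 → ℝ)).symm
    ![u 1 * v 2 - u 2 * v 1, u 2 * v 0 - u 0 * v 2, u 0 * v 1 - u 1 * v 0]

lemma crossE_apply (u v : E3) (i : Fin 3) :
    crossE u v i = ![u 1 * v 2 - u 2 * v 1, u 2 * v 0 - u 0 * v 2, u 0 * v 1 - u 1 * v 0] i := rfl

lemma inner3 (x y : E3) : ⟪x, y⟫ = x 0 * y 0 + x 1 * y 1 + x 2 * y 2 := by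
  simp [PiLp.inner_apply, RCLike.inner_apply, Fin.sum_univ_three]; ring

lemma lagrange (u v : E3) : ⟪crossE u v, crossE u v⟫ = ⟪u,u⟫ * ⟪v,v⟫ - ⟪u,v⟫^2 := by
  rw [inner3, inner3, inner3, inner3]; simp [crossE_apply, Fin.sum_univ_three]; ring

lemma inner_crossE_left (u v : E3) : ⟪u, crossE u v⟫ = 0 := by
  simp [inner3, crossE_apply, Fin.sum_univ_three]; ring

lemma crossE_self (u : E3) : crossE u u = 0 := by
  ext i; fin_cases i <;> simp [crossE_apply, Fin.sum_univ_three] <;> ring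

noncomputable def crossLM : E3 →ₗ[ℝ] E3 →ₗ[ℝ] E3 :=
  LinearMap.mk₂ ℝ crossE
    (fun x y z => by ext i; fin_cases i <;> simp [crossE_apply, Fin.sum_univ_three] <;> ring)
    (fun c x y => by ext i; fin_cases i <;> simp [crossE_apply, Fin.sum_univ_three] <;> ring)
    (fun x y z => by ext i; fin_cases i <;> simp [crossE_apply, Fin.sum_univ_three] <;> ring)
    (fun c x y => by ext i; fin_cases i <;> simp [crossE_apply, Fin.sum_univ_three] <;> ring)

noncomputable def crossCLM : E3 →L[ℝ] E3 →L[ℝ] E3 :=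
  LinearMap.toContinuousLinearMap
    { toFun := fun u => LinearMap.toContinuousLinearMap (crossLM u)
      map_add' := fun x y => by ext v; simp [map_add]
      map_smul' := fun c x => by ext v; simp [_root_.map_smul] }

lemma crossCLM_apply (u v : E3) : crossCLM u v = crossE u v := rfl

/-- helper: a function with a known derivative that is constant on an open set has zero
derivative there. -/
lemma deriv_eq_zero_of_const {I : Set ℝ} (hI : IsOpen I) {s : ℝ} (hs : s ∈ I)
    {g : ℝ → ℝ} {m c : ℝ} (h : HasDerivAt g m s) (hc : ∀ t ∈ I, g t = c) : m = 0 := by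
  have hev : g =ᶠ[nhds s] fun _ => c := Filter.eventually_of_mem (hI.mem_nhds hs) hc
  have h1 := h.deriv
  rw [← h1, Filter.EventuallyEq.deriv_eq hev, deriv_const]

lemma const_of_hasDerivAt_zero {F : Type*} [NormedAddCommGroup F] [NormedSpace ℝ F]
    {I : Set ℝ} (hconv : Convex ℝ I) (hI : IsOpen I)
    {f : ℝ → F} (h : ∀ s ∈ I, HasDerivAt f (0 : F) s) {x y : ℝ} (hx : x ∈ I) (hy : y ∈ I) :
    f x = f y := by
  refine hconv.is_const_of_fderivWithin_eq_zero
    (fun s hs => (h s hs).differentiableAt.differentiableWithinAt) (fun s hs => ?_) hx hy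
  rw [fderivWithin_of_isOpen hI hs, (h s hs).hasFDerivAt.fderiv]
  ext t; simp

set_option maxHeartbeats 1000000 in
/-- For a smooth unit-speed curve in `E³` with nowhere-vanishing curvature,
`det(α', α'', α''') = 0` on `I` iff `α` is a plane curve, i.e. `⟪α(s), d⟫ = c` on `I`
for some unit vector `d` and constant `c`. -/
theorem stmt_10 (p q : ℝ) (α : ℝ → EuclideanSpace ℝ (Fin 3))
    (hα : ContDiffOn ℝ (⊤ : ℕ∞) α (Set.Ioo p q))
    (hunit : ∀ s ∈ Set.Ioo p q, ‖deriv α s‖ = 1)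
    (hκ : ∀ s ∈ Set.Ioo p q, ‖iteratedDeriv 2 α s‖ > 0) :
    (∀ s ∈ Set.Ioo p q,
        det3 (deriv α s) (iteratedDeriv 2 α s) (iteratedDeriv 3 α s) = 0) ↔
      (∃ d : EuclideanSpace ℝ (Fin 3), ‖d‖ = 1 ∧ ∃ c : ℝ,
        ∀ s ∈ Set.Ioo p q, ⟪α s, d⟫ = c) := by
  rcases le_or_gt q p with hqp | hpq
  · -- empty interval
    have hempty : Set.Ioo p q = ∅ := Set.Ioo_eq_empty (not_lt.mpr hqp)
    constructor
    · intro _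
      refine ⟨EuclideanSpace.single 0 (1 : ℝ), by simp [EuclideanSpace.norm_single], 0,
        fun s hs => by rw [hempty] at hs; exact absurd hs (Set.notMem_empty s)⟩
    · intro _ s hs; rw [hempty] at hs; exact absurd hs (Set.notMem_empty s)
  set I : Set ℝ := Set.Ioo p q with hIdef
  have hI : IsOpen I := isOpen_Ioo
  have hconv : Convex ℝ I := convex_Ioo p q
  set T := deriv α with hTdef
  set A := iteratedDeriv 2 α with hAdef
  set J := iteratedDeriv 3 α with hJdef
  have hAd : A = deriv T := by rw [hAdef, hTdef, iteratedDeriv_succ, iteratedDeriv_one]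
  have hJd : J = deriv A := by rw [hJdef, hAdef, iteratedDeriv_succ]
  have hTc : ContDiffOn ℝ (⊤ : ℕ∞) T I := hα.deriv_of_isOpen hI (by simp)
  have hAc : ContDiffOn ℝ (⊤ : ℕ∞) A I := hAd ▸ hTc.deriv_of_isOpen hI (by simp)
  have hDα : ∀ s ∈ I, HasDerivAt α (T s) s := fun s hs =>
    ((hα.differentiableOn (by simp)).differentiableAt (hI.mem_nhds hs)).hasDerivAt
  have hDT : ∀ s ∈ I, HasDerivAt T (A s) s := fun s hs => by
    rw [hAd]
    exact ((hTc.differentiableOn (by simp)).differentiableAt (hI.mem_nhds hs)).hasDerivAt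
  have hDA : ∀ s ∈ I, HasDerivAt A (J s) s := fun s hs => by
    rw [hJd]
    exact ((hAc.differentiableOn (by simp)).differentiableAt (hI.mem_nhds hs)).hasDerivAt
  have hTT : ∀ s ∈ I, ⟪T s, T s⟫ = 1 := fun s hs => by
    rw [real_inner_self_eq_norm_sq, hunit s hs]; norm_num
  have hATo : ∀ s ∈ I, ⟪A s, T s⟫ = 0 := by
    intro s hs
    have h1 : HasDerivAt (fun t => ⟪T t, T t⟫) (⟪T s, A s⟫ + ⟪A s, T s⟫) s :=
      (hDT s hs).inner ℝ (hDT s hs)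
    have h2 := deriv_eq_zero_of_const hI hs h1 hTT
    have h3 : ⟪T s, A s⟫ = ⟪A s, T s⟫ := real_inner_comm _ _
    linarith
  have hAA : ∀ s ∈ I, ⟪A s, A s⟫ > 0 := fun s hs => by
    rw [real_inner_self_eq_norm_sq]
    have := hκ s hs
    positivity
  constructor
  · -- hard direction
    intro hdet
    set w : ℝ → E3 := fun s => crossE (T s) (A s) with hwdef
    -- pointwise: w' is a multiple of w
    have hkey : ∀ s ∈ I, ∃ γ : ℝ, HasDerivAt w (γ • w s) s := by
      intro s hs
      -- linear dependence of T, A, J at s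
      have hdet0 : Matrix.det !![T s 0, T s 1, T s 2; A s 0, A s 1, A s 2;
          J s 0, J s 1, J s 2] = 0 := hdet s hs
      obtain ⟨x, hx0, hxM⟩ := Matrix.exists_vecMul_eq_zero_iff.mpr hdet0
      have h0 := congrFun hxM 0
      have h1 := congrFun hxM 1
      have h2 := congrFun hxM 2
      simp [Matrix.vecMul, dotProduct, Fin.sum_univ_three] at h0 h1 h2
      have hTT' := hTT s hs; rw [inner3] at hTT'
      have hATo' := hATo s hs; rw [inner3] at hATo'
      have hAA' := hAA s hs; rw [inner3] at hAA'
      have hx2 : x 2 ≠ 0 := by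
        intro hx2
        rw [hx2] at h0 h1 h2
        have e0 : x 0 * T s 0 + x 1 * A s 0 = 0 := by linarith
        have e1 : x 0 * T s 1 + x 1 * A s 1 = 0 := by linarith
        have e2 : x 0 * T s 2 + x 1 * A s 2 = 0 := by linarith
        have hx0' : x 0 = 0 := by
          linear_combination T s 0 * e0 + T s 1 * e1 + T s 2 * e2 - x 0 * hTT' - x 1 * hATo'
        have h4 : x 1 * (A s 0 * A s 0 + A s 1 * A s 1 + A s 2 * A s 2) = 0 := by
          linear_combination A s 0 * e0 + A s 1 * e1 + A s 2 * e2 - x 0 * hATo'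
        have hx1' : x 1 = 0 := by
          rcases mul_eq_zero.mp h4 with h | h
          · exact h
          · exact absurd h (ne_of_gt hAA')
        exact hx0 (by funext i; fin_cases i <;> simp [hx0', hx1', hx2])
      refine ⟨-(x 1) / x 2, ?_⟩
      -- J s as combination
      have hJcomb : J s = (-(x 0) / x 2) • T s + (-(x 1) / x 2) • A s := by
        ext i
        fin_cases i
        · show J s 0 = ((-(x 0) / x 2) • T s + (-(x 1) / x 2) • A s) 0
          simp only [PiLp.add_apply, PiLp.smul_apply, smul_eq_mul]
          field_simp
          linear_combination h0
        · show J s 1 = ((-(x 0) / x 2) • T s + (-(x 1) / x 2) • A s) 1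
          simp only [PiLp.add_apply, PiLp.smul_apply, smul_eq_mul]
          field_simp
          linear_combination h1
        · show J s 2 = ((-(x 0) / x 2) • T s + (-(x 1) / x 2) • A s) 2
          simp only [PiLp.add_apply, PiLp.smul_apply, smul_eq_mul]
          field_simp
          linear_combination h2
      -- derivative of w
      have hc1 : HasDerivAt (fun t => crossCLM (T t)) (crossCLM (A s)) s :=
        crossCLM.hasFDerivAt.comp_hasDerivAt s (hDT s hs)
      have hw1 : HasDerivAt (fun t => crossCLM (T t) (A t))
          (crossCLM (A s) (A s) + crossCLM (T s) (J s)) s := hc1.clm_apply (hDA s hs)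
      have hweq : (fun t => crossCLM (T t) (A t)) = w := by
        funext t; rw [crossCLM_apply]
      have hval : crossCLM (A s) (A s) + crossCLM (T s) (J s) = (-(x 1) / x 2) • w s := by
        rw [hJcomb, map_add, _root_.map_smul, _root_.map_smul, crossCLM_apply, crossCLM_apply, crossCLM_apply,
          crossE_self, crossE_self, hwdef]
        simp
      rw [hweq, hval] at hw1
      exact hw1
    -- norm-squared of w
    have hww : ∀ s ∈ I, ⟪w s, w s⟫ > 0 := by
      intro s hs
      have hTA0 : ⟪T s, A s⟫ = 0 := by rw [real_inner_comm]; exact hATo s hs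
      simp only [hwdef]
      rw [lagrange, hTT s hs, hTA0]
      simpa using hAA s hs
    set g : ℝ → ℝ := fun s => ⟪w s, w s⟫ with hgdef
    set n : ℝ → ℝ := fun s => Real.sqrt (g s) with hndef
    set d : ℝ → E3 := fun s => (n s)⁻¹ • w s with hddef
    have hnpos : ∀ s ∈ I, 0 < n s := fun s hs => Real.sqrt_pos.mpr (hww s hs)
    have hd0 : ∀ s ∈ I, HasDerivAt d 0 s := by
      intro s hs
      obtain ⟨γ, hw'⟩ := hkey s hs
      have hg' : HasDerivAt g (⟪w s, γ • w s⟫ + ⟪γ • w s, w s⟫) s := hw'.inner ℝ hw'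
      have hg'' : HasDerivAt g (2 * γ * g s) s := by
        convert hg' using 1
        rw [real_inner_smul_right, real_inner_smul_left, hgdef]
        ring
      have hn' : HasDerivAt n ((2 * γ * g s) / (2 * Real.sqrt (g s))) s :=
        hg''.sqrt (hww s hs).ne'
      have hns := hnpos s hs
      have hn'' : HasDerivAt n (γ * n s) s := by
        convert hn' using 1
        have h1 : g s = n s ^ 2 := by
          simp only [hndef]
          rw [Real.sq_sqrt (hww s hs).le]
        rw [show Real.sqrt (g s) = n s from rfl, h1]
        field_simp
      have hdd : HasDerivAt d ((n s)⁻¹ • (γ • w s) + (-(γ * n s) / n s ^ 2) • w s) s :=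
        (hn''.inv hns.ne').smul hw'
      have hz : (n s)⁻¹ • (γ • w s) + (-(γ * n s) / n s ^ 2) • w s = 0 := by
        rw [smul_smul, ← add_smul]
        convert zero_smul ℝ (w s) using 2
        field_simp
        ring
      rwa [hz] at hdd
    set s₀ : ℝ := (p + q) / 2 with hs₀def
    have hs₀ : s₀ ∈ I := by constructor <;> (rw [hs₀def]; linarith)
    have hdconst : ∀ s ∈ I, d s = d s₀ := fun s hs =>
      const_of_hasDerivAt_zero hconv hI hd0 hs hs₀
    have hnw : ∀ s ∈ I, n s = ‖w s‖ := by
      intro s hs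
      simp only [hndef]
      rw [hgdef]; simp only []
      rw [real_inner_self_eq_norm_sq, Real.sqrt_sq (norm_nonneg _)]
    have hdnorm : ‖d s₀‖ = 1 := by
      simp only [hddef]
      rw [norm_smul, hnw s₀ hs₀, norm_inv, Real.norm_eq_abs,
        abs_of_pos (hnw s₀ hs₀ ▸ hnpos s₀ hs₀)]
      exact inv_mul_cancel₀ (hnw s₀ hs₀ ▸ (hnpos s₀ hs₀)).ne'
    refine ⟨d s₀, hdnorm, ⟪α s₀, d s₀⟫, ?_⟩
    intro s hs
    have hF0 : ∀ t ∈ I, HasDerivAt (fun r => ⟪α r, d s₀⟫) (0 : ℝ) t := by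
      intro t ht
      have h1 : HasDerivAt (fun r => ⟪α r, d s₀⟫) (⟪α t, 0⟫ + ⟪T t, d s₀⟫) t :=
        (hDα t ht).inner ℝ (hasDerivAt_const t (d s₀))
      have h2 : ⟪T t, d s₀⟫ = 0 := by
        rw [← hdconst t ht]
        simp only [hddef, hwdef]
        rw [real_inner_smul_right, inner_crossE_left]; ring
      simpa [h2] using h1
    exact const_of_hasDerivAt_zero hconv hI hF0 hs hs₀
  · -- easy direction
    rintro ⟨d, hd1, c, hc⟩ s hs
    have hTd : ∀ t ∈ I, ⟪T t, d⟫ = 0 := by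
      intro t ht
      have h1 : HasDerivAt (fun r => ⟪α r, d⟫) (⟪α t, 0⟫ + ⟪T t, d⟫) t :=
        (hDα t ht).inner ℝ (hasDerivAt_const t d)
      have h2 := deriv_eq_zero_of_const hI ht h1 hc
      simpa using h2
    have hAd' : ⟪A s, d⟫ = 0 := by
      have h1 : HasDerivAt (fun r => ⟪T r, d⟫) (⟪T s, 0⟫ + ⟪A s, d⟫) s :=
        (hDT s hs).inner ℝ (hasDerivAt_const s d)
      have h2 := deriv_eq_zero_of_const hI hs h1 hTd
      simpa using h2
    have hJd' : ⟪J s, d⟫ = 0 := by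
      have hAd2 : ∀ t ∈ I, ⟪A t, d⟫ = 0 := by
        intro t ht
        have h1 : HasDerivAt (fun r => ⟪T r, d⟫) (⟪T t, 0⟫ + ⟪A t, d⟫) t :=
          (hDT t ht).inner ℝ (hasDerivAt_const t d)
        have h2 := deriv_eq_zero_of_const hI ht h1 hTd
        simpa using h2
      have h1 : HasDerivAt (fun r => ⟪A r, d⟫) (⟪A s, 0⟫ + ⟪J s, d⟫) s :=
        (hDA s hs).inner ℝ (hasDerivAt_const s d)
      have h2 := deriv_eq_zero_of_const hI hs h1 hAd2
      simpa using h2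
    have hTd' := hTd s hs
    rw [inner3] at hTd' hAd' hJd'
    have hdnz : ⟪d, d⟫ ≠ 0 := by
      rw [real_inner_self_eq_norm_sq, hd1]; norm_num
    rw [inner3] at hdnz
    have hvnz : (fun i => d i : Fin 3 → ℝ) ≠ 0 := by
      intro h
      apply hdnz
      have h0 := congrFun h 0; have h1 := congrFun h 1; have h2 := congrFun h 2
      simp only [Pi.zero_apply] at h0 h1 h2
      rw [h0, h1, h2]; ring
    have hMv : (!![T s 0, T s 1, T s 2; A s 0, A s 1, A s 2;
        J s 0, J s 1, J s 2]) *ᵥ (fun i => d i) = 0 := by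
      funext i
      fin_cases i <;>
        · simp [Matrix.mulVec, dotProduct, Fin.sum_univ_three]
          linarith
    exact Matrix.exists_mulVec_eq_zero_iff.mp ⟨_, hvnz, hMv⟩
end
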